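/- arXiv:2004.08294 — 11 statements merged into one kernel-verified Lean document; each statement's English description precedes it below -/
import Mathlib

section
/- A finite poset P is an interval order (i.e., admits an assignment of closed real intervals [l(x), r(x)] to elements such that x < y in P iff r(x) < l(y)) if and only if P contains no subposet isomorphic to 2+2 (the disjoint union of two 2-element chains). -/
/-!
If `x ↦ [l x, r x]` represents `P` and `a₁ < b₁`, `a₂ < b₂` were a copy of 2+2, then
`r a₁ < l b₁ ≤ r a₂ < l b₂ ≤ r a₁`. Conversely, without 2+2 the strict down-sets `Iio x` form a
chain, so `l x := #(Iio x)` ranks them, and `r x` is the largest rank of a down-set avoiding `x`.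
-/

/-- Two elements are incomparable in a poset. -/
def Incomp {α : Type*} [PartialOrder α] (x y : α) : Prop := ¬ x ≤ y ∧ ¬ y ≤ x

/-- The poset contains a subposet isomorphic to 2+2 (two disjoint 2-chains). -/
def HasTwoPlusTwo (α : Type*) [PartialOrder α] : Prop :=
  ∃ a₁ b₁ a₂ b₂ : α, a₁ < b₁ ∧ a₂ < b₂ ∧
    Incomp a₁ a₂ ∧ Incomp a₁ b₂ ∧ Incomp b₁ a₂ ∧ Incomp b₁ b₂

open Set

section TwoPlusTwo

variable {α : Type*} [PartialOrder α]

theorem not_hasTwoPlusTwo_of_lt_iff {β : Type*} [LinearOrder β] {l r : α → β}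
    (h : ∀ x y, x < y ↔ r x < l y) : ¬ HasTwoPlusTwo α := by
  rintro ⟨a₁, b₁, a₂, b₂, h₁, h₂, -, ⟨ha₁b₂, -⟩, ⟨-, ha₂b₁⟩, -⟩
  have := (h _ _).1 h₁
  have := (h _ _).1 h₂
  have : l b₂ ≤ r a₁ := not_lt.1 fun h' => ha₁b₂ ((h _ _).2 h').le
  have : l b₁ ≤ r a₂ := not_lt.1 fun h' => ha₂b₁ ((h _ _).2 h').le
  order

theorem Iio_subset_or_subset_of_not_hasTwoPlusTwo (h : ¬ HasTwoPlusTwo α) (x y : α) :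
    Iio x ⊆ Iio y ∨ Iio y ⊆ Iio x := by
  by_contra! hxy
  obtain ⟨⟨a₂, ha₂x, ha₂y⟩, ⟨a₁, ha₁y, ha₁x⟩⟩ := And.imp not_subset.1 not_subset.1 hxy
  simp only [mem_Iio] at ha₂x ha₂y ha₁y ha₁x
  exact h ⟨a₁, y, a₂, x, ha₁y, ha₂x, ⟨by order, by order⟩, ⟨by order, by order⟩,
    ⟨by order, by order⟩, ⟨by order, by order⟩⟩

end TwoPlusTwo

namespace IntervalRep

variable {α : Type*} [PartialOrder α] [Fintype α]

noncomputable def left (x : α) : ℕ := (Iio x).ncard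

open Classical in
noncomputable def right (x : α) : ℕ := ({z | ¬ x < z} : Finset α).sup left

theorem le_right_of_not_lt {x y : α} (h : ¬ x < y) : left y ≤ right x := by
  classical
  exact Finset.le_sup (f := left) (by simpa using h)

theorem left_le_right (x : α) : left x ≤ right x :=
  le_right_of_not_lt (lt_irrefl x)

theorem right_lt_left_of_lt (hchain : ∀ x y : α, Iio x ⊆ Iio y ∨ Iio y ⊆ Iio x) {x y : α}
    (hxy : x < y) : right x < left y := by
  classical
  have hpos : 0 < left y := (ncard_pos).2 ⟨x, hxy⟩
  refine (Finset.sup_lt_iff hpos).2 fun z hz => ncard_lt_ncard ?_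
  have hxz : ¬ x < z := by simpa using hz
  rcases hchain z y with hzy | hyz
  · exact ssubset_of_subset_not_subset hzy fun h => hxz (h hxy)
  · exact absurd (hyz hxy) hxz

theorem lt_iff_right_lt_left (hchain : ∀ x y : α, Iio x ⊆ Iio y ∨ Iio y ⊆ Iio x) (x y : α) :
    x < y ↔ right x < left y :=
  ⟨right_lt_left_of_lt hchain, fun h => by_contra fun hxy => not_lt.2 (le_right_of_not_lt hxy) h⟩

end IntervalRep

theorem stmt_0 {α : Type*} [Fintype α] [PartialOrder α] :
    (∃ l r : α → ℝ, (∀ x, l x ≤ r x) ∧ ∀ x y : α, x < y ↔ r x < l y) ↔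
      ¬ HasTwoPlusTwo α := by
  refine ⟨fun ⟨_, _, _, h⟩ => not_hasTwoPlusTwo_of_lt_iff h, fun h => ?_⟩
  have hchain := Iio_subset_or_subset_of_not_hasTwoPlusTwo h
  refine ⟨fun x => IntervalRep.left x, fun x => IntervalRep.right x,
    fun x => Nat.cast_le.2 (IntervalRep.left_le_right x), fun x y => ?_⟩
  rw [IntervalRep.lt_iff_right_lt_left hchain, Nat.cast_lt]
end

section
/- A finite poset P is a unit interval order (admits an interval representation in which every interval is closed of length 1) if and only if P contains no subposet isomorphic to 2+2 and no subposet isomorphic to 1+3. -/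
/-- The poset contains a subposet isomorphic to 1+3 (a point plus a 3-chain). -/
def HasOnePlusThree (α : Type*) [PartialOrder α] : Prop :=
  ∃ a b d c : α, a < b ∧ b < d ∧ Incomp c a ∧ Incomp c b ∧ Incomp c d

/-!
Say that `x` is trace-below `y` if everything below `x` is below `y` and everything above `y` is
above `x`. Excluding 2+2 and 1+3 makes this preorder total, and then whether `x < y` depends only
on the trace ranks of `x` and `y`, through a relation on ranks that is down-closed in the first
and up-closed in the second argument. Such a staircase relation is represented by unit intervals
greedily, rank by rank: the left endpoint of the next rank has to lie above finitely many numbers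
and below finitely many others, and the previous choices make every lower bound smaller than
every upper bound.
-/

section Staircase

variable {Q : ℕ → ℕ → Prop} {L : ℕ → ℝ} {n : ℕ}

/-- The strict inequalities, which exclude touching intervals, leave room to place the next
level. -/
def IsStrictUnitRepOn (Q : ℕ → ℕ → Prop) (L : ℕ → ℝ) (n : ℕ) : Prop :=
  ∀ i j, i < j → j ≤ n → L i < L j ∧ (Q i j → L i + 1 < L j) ∧ (¬ Q i j → L j < L i + 1)

lemma IsStrictUnitRepOn.le {i j : ℕ} (hL : IsStrictUnitRepOn Q L n) (hij : i ≤ j) (hj : j ≤ n) :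
    L i ≤ L j :=
  hij.eq_or_lt.elim (fun h => h ▸ le_rfl) fun h => (hL i j h hj).1.le

lemma IsStrictUnitRepOn.exists_update_succ
    (hQ : ∀ ⦃i j i' j'⦄, i' ≤ i → j ≤ j' → Q i j → Q i' j') (hL : IsStrictUnitRepOn Q L n) :
    ∃ t, IsStrictUnitRepOn Q (Function.update L (n + 1) t) (n + 1) := by
  obtain ⟨t, hlow, hup⟩ := Set.Finite.exists_between'
    (s := insert (L n) ((L · + 1) '' {i | i ≤ n ∧ Q i (n + 1)}))
    (t := (L · + 1) '' {i | i ≤ n ∧ ¬ Q i (n + 1)})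
    (((Set.finite_Iic n).subset fun _ h => h.1).image _ |>.insert _)
    (((Set.finite_Iic n).subset fun _ h => h.1).image _) (by
      simp only [Set.forall_mem_insert, Set.forall_mem_image, Set.mem_ofPred_eq]
      refine ⟨fun k ⟨hk, hnQ⟩ => ?_, fun i ⟨_, hQi⟩ k ⟨hk, hnQ⟩ => ?_⟩
      · rcases hk.lt_or_eq with hk | rfl
        · exact (hL k n hk le_rfl).2.2 fun h => hnQ (hQ le_rfl n.le_succ h)
        · linarith
      · have hik : i < k := lt_of_not_ge fun h => hnQ (hQ h le_rfl hQi)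
        linarith [(hL i k hik hk).1])
  simp only [Set.forall_mem_insert, Set.forall_mem_image, Set.mem_ofPred_eq] at hlow hup
  refine ⟨t, fun i j hij hj => ?_⟩
  have hi : i ≠ n + 1 := by omega
  rcases hj.lt_or_eq with hj | rfl
  · simpa only [Function.update_of_ne hi, Function.update_of_ne hj.ne] using
      hL i j hij (Nat.lt_succ_iff.mp hj)
  · simp only [Function.update_of_ne hi, Function.update_self]
    exact ⟨(hL.le (by omega) le_rfl).trans_lt hlow.1, fun h => hlow.2 ⟨by omega, h⟩,
      fun h => hup ⟨by omega, h⟩⟩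

lemma exists_isStrictUnitRepOn (hQ : ∀ ⦃i j i' j'⦄, i' ≤ i → j ≤ j' → Q i j → Q i' j')
    (n : ℕ) : ∃ L, IsStrictUnitRepOn Q L n := by
  induction n with
  | zero => exact ⟨0, fun i j hij hj => by omega⟩
  | succ n ih =>
    obtain ⟨L, hL⟩ := ih
    obtain ⟨t, ht⟩ := hL.exists_update_succ hQ
    exact ⟨_, ht⟩

lemma exists_unitRep_of_staircase (hlt : ∀ ⦃i j⦄, Q i j → i < j)
    (hQ : ∀ ⦃i j i' j'⦄, i' ≤ i → j ≤ j' → Q i j → Q i' j') (n : ℕ) :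
    ∃ L : ℕ → ℝ, ∀ i ≤ n, ∀ j ≤ n, Q i j ↔ L i + 1 < L j := by
  obtain ⟨L, hL⟩ := exists_isStrictUnitRepOn hQ n
  refine ⟨L, fun i hi j hj => ?_⟩
  rcases lt_or_ge i j with hij | hji
  · obtain ⟨-, hQ, hnQ⟩ := hL i j hij hj
    exact ⟨hQ, fun h => by_contra fun h' => (hnQ h').not_gt h⟩
  · have := hL.le hji hi
    exact ⟨fun h => absurd (hlt h) hji.not_gt, fun h => by linarith⟩

end Staircase

section UnitIntervalOrder

variable {α : Type*} [PartialOrder α]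

def IsUnitIntervalRep (l : α → ℝ) : Prop := ∀ x y, x < y ↔ l x + 1 < l y

lemma IsUnitIntervalRep.not_hasTwoPlusTwo {l : α → ℝ} (hl : IsUnitIntervalRep l) :
    ¬ HasTwoPlusTwo α := by
  rintro ⟨a, b, c, d, hab, hcd, -, had, hcb, -⟩
  have h₁ := (hl a b).mp hab
  have h₂ := (hl c d).mp hcd
  have h₃ : l d ≤ l a + 1 := not_lt.mp fun h => had.1 ((hl a d).mpr h).le
  have h₄ : l b ≤ l c + 1 := not_lt.mp fun h => hcb.2 ((hl c b).mpr h).le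
  linarith

lemma IsUnitIntervalRep.not_hasOnePlusThree {l : α → ℝ} (hl : IsUnitIntervalRep l) :
    ¬ HasOnePlusThree α := by
  rintro ⟨a, b, d, c, hab, hbd, hca, -, hcd⟩
  have h₁ := (hl a b).mp hab
  have h₂ := (hl b d).mp hbd
  have h₃ : l c ≤ l a + 1 := not_lt.mp fun h => hca.2 ((hl a c).mpr h).le
  have h₄ : l d ≤ l c + 1 := not_lt.mp fun h => hcd.1 ((hl c d).mpr h).le
  linarith

lemma hasTwoPlusTwo_of_not_lt {a x b y : α} (hax : a < x) (hby : b < y) (hay : ¬ a < y)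
    (hbx : ¬ b < x) : HasTwoPlusTwo α :=
  ⟨a, x, b, y, hax, hby, ⟨by order, by order⟩, ⟨by order, by order⟩, ⟨by order, by order⟩,
    ⟨by order, by order⟩⟩

lemma hasOnePlusThree_of_not_lt {a x b y : α} (hax : a < x) (hxb : x < b) (hay : ¬ a < y)
    (hyb : ¬ y < b) : HasOnePlusThree α :=
  ⟨a, x, b, y, hax, hxb, ⟨by order, by order⟩, ⟨by order, by order⟩, ⟨by order, by order⟩⟩

def TraceLE (x y : α) : Prop := ∀ z, (z < x → z < y) ∧ (y < z → x < z)

lemma TraceLE.trans {x y z : α} (hxy : TraceLE x y) (hyz : TraceLE y z) : TraceLE x z :=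
  fun w => ⟨fun h => (hyz w).1 ((hxy w).1 h), fun h => (hxy w).2 ((hyz w).2 h)⟩

lemma traceLE_total (h22 : ¬ HasTwoPlusTwo α) (h13 : ¬ HasOnePlusThree α) (x y : α) :
    TraceLE x y ∨ TraceLE y x := by
  by_contra! ⟨hxy, hyx⟩
  simp only [TraceLE, not_forall, not_and_or] at hxy hyx
  obtain ⟨a, ⟨hax, hay⟩ | ⟨hya, hxa⟩⟩ := hxy <;> obtain ⟨b, ⟨hby, hbx⟩ | ⟨hxb, hyb⟩⟩ := hyx
  · exact h22 (hasTwoPlusTwo_of_not_lt hax hby hay hbx)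
  · exact h13 (hasOnePlusThree_of_not_lt hax hxb hay hyb)
  · exact h13 (hasOnePlusThree_of_not_lt hby hya hbx hxa)
  · exact h22 (hasTwoPlusTwo_of_not_lt hya hxb hyb hxa)

variable [Fintype α]

open Classical in
noncomputable def traceRank (x : α) : ℕ := (Finset.univ.filter (TraceLE · x)).card

lemma traceRank_le_card (x : α) : traceRank x ≤ Fintype.card α :=
  Finset.card_le_univ _

lemma traceRank_lt {x y : α} (hxy : TraceLE x y) (hyx : ¬ TraceLE y x) :
    traceRank x < traceRank y := by
  classical
  refine Finset.card_lt_card ⟨fun z hz => ?_, fun h => hyx ?_⟩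
  · simp only [Finset.mem_filter, Finset.mem_univ, true_and] at hz ⊢
    exact hz.trans hxy
  · simpa using h (Finset.mem_filter.mpr ⟨Finset.mem_univ y, fun _ => ⟨id, id⟩⟩)

lemma traceRank_lt_of_lt {x y : α} (h : x < y) : traceRank x < traceRank y :=
  traceRank_lt (fun _ => ⟨(·.trans h), h.trans⟩) fun hyx => lt_irrefl x ((hyx x).1 h)

lemma traceLE_of_traceRank_le (h22 : ¬ HasTwoPlusTwo α) (h13 : ¬ HasOnePlusThree α) {x y : α}
    (h : traceRank x ≤ traceRank y) : TraceLE x y :=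
  by_contra fun hxy =>
    (traceRank_lt ((traceLE_total h22 h13 x y).resolve_left hxy) hxy).not_ge h

lemma exists_isUnitIntervalRep (h22 : ¬ HasTwoPlusTwo α) (h13 : ¬ HasOnePlusThree α) :
    ∃ l : α → ℝ, IsUnitIntervalRep l := by
  obtain ⟨L, hL⟩ := exists_unitRep_of_staircase
    (Q := fun i j => ∃ x y : α, x < y ∧ i ≤ traceRank x ∧ traceRank y ≤ j)
    (by rintro i j ⟨x, y, hxy, hi, hj⟩; exact (hi.trans_lt (traceRank_lt_of_lt hxy)).trans_le hj)
    (by rintro i j i' j' hi hj ⟨x, y, hxy, hx, hy⟩; exact ⟨x, y, hxy, hi.trans hx, hy.trans hj⟩)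
    (Fintype.card α)
  refine ⟨L ∘ traceRank, fun x y => ?_⟩
  rw [Function.comp_apply, Function.comp_apply,
    ← hL _ (traceRank_le_card x) _ (traceRank_le_card y)]
  refine ⟨fun h => ⟨x, y, h, le_rfl, le_rfl⟩, fun ⟨x', y', h, hx, hy⟩ => ?_⟩
  exact (traceLE_of_traceRank_le h22 h13 hy x).1
    ((traceLE_of_traceRank_le h22 h13 hx y').2 h)

end UnitIntervalOrder

theorem stmt_1 {α : Type*} [Fintype α] [PartialOrder α] :
    (∃ l : α → ℝ, ∀ x y : α, x < y ↔ l x + 1 < l y) ↔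
      (¬ HasTwoPlusTwo α ∧ ¬ HasOnePlusThree α) :=
  ⟨fun ⟨_, hl⟩ =>
    ⟨IsUnitIntervalRep.not_hasTwoPlusTwo hl, IsUnitIntervalRep.not_hasOnePlusThree hl⟩,
    fun ⟨h22, h13⟩ => exists_isUnitIntervalRep h22 h13⟩
end

section
/- In a finite interval order, any strict alternating cycle of length at least 2 contains at most one strict comparability among the relations x_i ≤ y_{i+1}; that is, if x_i < y_{i+1} and x_j < y_{j+1} strictly for i ≠ j, then the poset contains a 2+2, contradicting being an interval order. -/
/-- A strict alternating cycle of length `k + 1`: `x i ≤ y (i+1)` cyclically, and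
`x i` is incomparable to `y j` whenever `j ≠ i + 1` (cyclically). -/
def IsStrictAltCycle {α : Type*} [PartialOrder α] {k : ℕ} (x y : Fin (k + 1) → α) : Prop :=
  (∀ i : Fin (k + 1), x i ≤ y (i + 1)) ∧
    ∀ i j : Fin (k + 1), j ≠ i + 1 → Incomp (x i) (y j)

/-- Every other comparability between the two chains would give `a ≤ d` or `c ≤ b` by
transitivity. -/
theorem hasTwoPlusTwo_of_not_le_of_not_le {α : Type*} [PartialOrder α] {a b c d : α}
    (hab : a < b) (hcd : c < d) (had : ¬ a ≤ d) (hcb : ¬ c ≤ b) : HasTwoPlusTwo α :=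
  ⟨a, b, c, d, hab, hcd,
    ⟨fun hac => had (hac.trans hcd.le), fun hca => hcb (hca.trans hab.le)⟩,
    ⟨had, fun hda => hcb (hcd.le.trans (hda.trans hab.le))⟩,
    ⟨fun hbc => had (hab.le.trans (hbc.trans hcd.le)), hcb⟩,
    ⟨fun hbd => had (hab.le.trans hbd), fun hdb => hcb (hcd.le.trans hdb)⟩⟩

theorem IsStrictAltCycle.not_le {α : Type*} [PartialOrder α] {k : ℕ} {x y : Fin (k + 1) → α}
    (hc : IsStrictAltCycle x y) {i j : Fin (k + 1)} (hij : i ≠ j) : ¬ x i ≤ y (j + 1) :=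
  (hc.2 i (j + 1) fun h => hij (add_right_cancel h).symm).1

theorem stmt_3_general {α : Type*} [PartialOrder α] (h : ¬ HasTwoPlusTwo α)
    {k : ℕ} (x y : Fin (k + 1) → α) (hc : IsStrictAltCycle x y) :
    ∀ i j : Fin (k + 1), x i < y (i + 1) → x j < y (j + 1) → i = j := by
  intro i j hi hj
  by_contra hij
  exact h (hasTwoPlusTwo_of_not_le_of_not_le hi hj (hc.not_le hij) (hc.not_le (Ne.symm hij)))

/-- In an interval order (no 2+2), a strict alternating cycle of length at least 2
contains at most one strict comparability among the relations `x i ≤ y (i+1)`. -/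
theorem stmt_3 {α : Type*} [Fintype α] [PartialOrder α] (h : ¬ HasTwoPlusTwo α)
    {k : ℕ} (hk : 1 ≤ k) (x y : Fin (k + 1) → α) (hc : IsStrictAltCycle x y) :
    ∀ i j : Fin (k + 1), x i < y (i + 1) → x j < y (j + 1) → i = j :=
  stmt_3_general h x y hc
end

section
/- If Q is a finite interval order and A, B are disjoint subsets of Q, then there exists a linear extension L of Q such that for every a in A and b in B with a incomparable to b in Q, we have b < a in L. -/
/-- `L` is a linear extension of the partial order on `α`. -/
def IsLinearExtension {α : Type*} [PartialOrder α] (L : α → α → Prop) : Prop :=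
  IsLinearOrder α L ∧ ∀ x y : α, x ≤ y → L x y

section IntervalOrder

variable {α : Type*} [PartialOrder α]

theorem le_or_le_of_lt_of_lt_of_not_hasTwoPlusTwo (h : ¬ HasTwoPlusTwo α) {x y z w : α}
    (hxy : x < y) (hzw : z < w) : x ≤ w ∨ z ≤ y := by
  by_contra! hc
  obtain ⟨hxw, hzy⟩ := hc
  exact h ⟨x, y, z, w, hxy, hzw,
    ⟨fun hxz => hxw (hxz.trans hzw.le), fun hzx => hzy (hzx.trans hxy.le)⟩,
    ⟨hxw, fun hwx => hzy ((hzw.le.trans hwx).trans hxy.le)⟩,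
    ⟨fun hyz => hxw ((hxy.le.trans hyz).trans hzw.le), hzy⟩,
    ⟨fun hyw => hxw (hxy.le.trans hyw), fun hwy => hzy (hzw.le.trans hwy)⟩⟩

theorem not_lt_of_lt_of_incomp_of_incomp (h : ¬ HasTwoPlusTwo α) {a b a' b' : α}
    (hab : Incomp a b) (hab' : Incomp a' b') (hlt : a < b') : ¬ a' < b := fun hlt' =>
  (le_or_le_of_lt_of_lt_of_not_hasTwoPlusTwo h hlt' hlt).elim hab'.1 hab.1

def lowerBBelowA (A B : Set α) (x y : α) : Prop :=
  x ≤ y ∨ ∃ a ∈ A, ∃ b ∈ B, Incomp a b ∧ x ≤ b ∧ a ≤ y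

variable {A B : Set α}

theorem lowerBBelowA_trans (h : ¬ HasTwoPlusTwo α) (hAB : Disjoint A B) {x y z : α}
    (hxy : lowerBBelowA A B x y) (hyz : lowerBBelowA A B y z) : lowerBBelowA A B x z := by
  rcases hxy with hxy | ⟨a, ha, b, hb, hab, hxb, hay⟩ <;>
    rcases hyz with hyz | ⟨a', ha', b', hb', hab', hyb', ha'z⟩
  · exact .inl (hxy.trans hyz)
  · exact .inr ⟨a', ha', b', hb', hab', hxy.trans hyb', ha'z⟩
  · exact .inr ⟨a, ha, b, hb, hab, hxb, hay.trans hyz⟩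
  · by_cases hba' : b ≤ a'
    · exact .inl (hxb.trans (hba'.trans ha'z))
    by_cases ha'b : a' ≤ b
    · have hlt : a < b' := (hay.trans hyb').lt_of_ne (hAB.ne_of_mem ha hb')
      exact absurd (ha'b.lt_of_ne (hAB.ne_of_mem ha' hb))
        (not_lt_of_lt_of_incomp_of_incomp h hab hab' hlt)
    · exact .inr ⟨a', ha', b, hb, ⟨ha'b, hba'⟩, hxb, ha'z⟩

theorem lowerBBelowA_antisymm (h : ¬ HasTwoPlusTwo α) (hAB : Disjoint A B) {x y : α}
    (hxy : lowerBBelowA A B x y) (hyx : lowerBBelowA A B y x) : x = y := by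
  rcases hxy with hxy | ⟨a, ha, b, hb, hab, hxb, hay⟩ <;>
    rcases hyx with hyx | ⟨a', ha', b', hb', hab', hyb', ha'x⟩
  · exact le_antisymm hxy hyx
  · exact absurd ((ha'x.trans hxy).trans hyb') hab'.1
  · exact absurd ((hay.trans hyx).trans hxb) hab.1
  · exact absurd ((ha'x.trans hxb).lt_of_ne (hAB.ne_of_mem ha' hb))
      (not_lt_of_lt_of_incomp_of_incomp h hab hab'
        ((hay.trans hyb').lt_of_ne (hAB.ne_of_mem ha hb')))

theorem isPartialOrder_lowerBBelowA (h : ¬ HasTwoPlusTwo α) (hAB : Disjoint A B) :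
    IsPartialOrder α (lowerBBelowA A B) where
  refl _ := .inl le_rfl
  trans _ _ _ := lowerBBelowA_trans h hAB
  antisymm _ _ := lowerBBelowA_antisymm h hAB

end IntervalOrder

theorem stmt_4_general {α : Type*} [PartialOrder α] (h : ¬ HasTwoPlusTwo α)
    (A B : Set α) (hAB : Disjoint A B) :
    ∃ L : α → α → Prop, IsLinearExtension L ∧
      ∀ a ∈ A, ∀ b ∈ B, Incomp a b → L b a ∧ ¬ L a b := by
  have := isPartialOrder_lowerBBelowA h hAB
  obtain ⟨L, hL, hle⟩ := extend_partialOrder (lowerBBelowA A B)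
  refine ⟨L, ⟨hL, fun x y hxy => hle x y (.inl hxy)⟩, fun a ha b hb hab => ?_⟩
  have hba : L b a := hle b a (.inr ⟨a, ha, b, hb, hab, le_rfl, le_rfl⟩)
  exact ⟨hba, fun hab' => hAB.ne_of_mem ha hb (hL.antisymm a b hab' hba)⟩

theorem stmt_4 {α : Type*} [Fintype α] [PartialOrder α] (h : ¬ HasTwoPlusTwo α)
    (A B : Set α) (hAB : Disjoint A B) :
    ∃ L : α → α → Prop, IsLinearExtension L ∧
      ∀ a ∈ A, ∀ b ∈ B, Incomp a b → L b a ∧ ¬ L a b :=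
  stmt_4_general h A B hAB
end

section
/- Every finite unit interval order (semiorder) has order dimension at most 3. -/
/-- The order dimension of `α` is at most `t`: there are `t` linear extensions
whose intersection is the partial order. -/
def DimLE (α : Type*) [PartialOrder α] (t : ℕ) : Prop :=
  ∃ L : Fin t → α → α → Prop, (∀ i, IsLinearExtension (L i)) ∧
    ∀ x y : α, x ≤ y ↔ ∀ i, L i x y

open Function OrderDual

theorem isLinearExtension_of_strictMono {α β : Type*} [PartialOrder α] [LinearOrder β]
    {f : α → β} (hinj : Injective f) (hf : StrictMono f) :
    IsLinearExtension fun x y => f x ≤ f y where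
  left :=
    { refl := fun _ => le_rfl
      trans := fun _ _ _ => le_trans
      antisymm := fun _ _ hxy hyx => hinj (le_antisymm hxy hyx)
      total := fun _ _ => le_total _ _ }
  right _ _ h := hf.monotone h

namespace Semiorder

variable {α γ : Type*} (l : α → ℝ) (e : α → γ)

noncomputable def cellKey (x : α) : ℤ ×ₗ (ℝ ×ₗ γ)ᵒᵈ :=
  toLex (⌊l x⌋, toDual (toLex (l x, e x)))

/-- Position `0` (lower) or `1` (upper) of the cell of `x` in its group for the shift `s`. -/
noncomputable def cellParity (s : ℤ) (x : α) : ℤ := (⌊l x⌋ + s) % 2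

noncomputable def groupKey (s : ℤ) (x : α) : ℤ ×ₗ ℝ ×ₗ ℤ ×ₗ γ :=
  toLex ((⌊l x⌋ + s) / 2, toLex (l x - cellParity l s x, toLex (-cellParity l s x, e x)))

variable {l e}

theorem cellParity_nonneg (s : ℤ) (x : α) : 0 ≤ cellParity l s x :=
  Int.emod_nonneg _ two_ne_zero

theorem cellParity_le_one (s : ℤ) (x : α) : cellParity l s x ≤ 1 :=
  Int.lt_add_one_iff.mp (Int.emod_lt_of_pos _ two_pos)

theorem cellKey_injective (he : Injective e) : Injective (cellKey l e) := by
  intro x y h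
  simp only [cellKey, toLex_inj, Prod.mk.injEq, toDual_inj] at h
  exact he h.2.2

theorem groupKey_injective (he : Injective e) (s : ℤ) : Injective (groupKey l e s) := by
  intro x y h
  simp only [groupKey, toLex_inj, Prod.mk.injEq] at h
  exact he h.2.2.2

variable [LinearOrder γ]

theorem groupKey_lt_groupKey_of_floor_eq {x y : α} (hfloor : ⌊l x⌋ = ⌊l y⌋)
    (hxy : toLex (l x, e x) < toLex (l y, e y)) (s : ℤ) :
    groupKey l e s x < groupKey l e s y := by
  simpa only [groupKey, cellParity, hfloor, Prod.Lex.toLex_lt_toLex, lt_self_iff_false,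
    sub_lt_sub_iff_right, sub_left_inj, true_and, false_or] using hxy

variable [PartialOrder α] (hl : ∀ x y : α, x < y ↔ l x + 1 < l y)
include hl

theorem floor_lt_floor {x y : α} (hxy : x < y) : ⌊l x⌋ < ⌊l y⌋ := by
  have := (hl x y).1 hxy
  rw [Int.lt_iff_add_one_le, ← Int.floor_add_one]
  exact Int.floor_le_floor this.le

theorem floor_le_floor_add_one {x y : α} (hxy : ¬ x < y) : ⌊l y⌋ ≤ ⌊l x⌋ + 1 := by
  rw [← Int.floor_add_one]
  exact Int.floor_le_floor (not_lt.mp (mt (hl x y).2 hxy))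

theorem cellKey_strictMono : StrictMono (cellKey l e) := fun _ _ hxy =>
  Prod.Lex.toLex_lt_toLex.mpr (Or.inl (floor_lt_floor hl hxy))

theorem groupKey_strictMono (s : ℤ) : StrictMono (groupKey l e s) := by
  intro x y hxy
  have hgroup : (⌊l x⌋ + s) / 2 ≤ (⌊l y⌋ + s) / 2 :=
    Int.ediv_le_ediv two_pos (by linarith [floor_lt_floor hl hxy])
  have hshift : l x - cellParity l s x < l y - cellParity l s y := by
    have := (hl x y).1 hxy
    have hx : (0 : ℝ) ≤ cellParity l s x := by exact_mod_cast cellParity_nonneg s x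
    have hy : (cellParity l s y : ℝ) ≤ 1 := by exact_mod_cast cellParity_le_one s y
    linarith
  rcases hgroup.lt_or_eq with hlt | heq
  · exact Prod.Lex.toLex_lt_toLex.mpr (Or.inl hlt)
  · exact Prod.Lex.toLex_lt_toLex.mpr (Or.inr ⟨heq, Prod.Lex.toLex_lt_toLex.mpr (Or.inl hshift)⟩)

theorem groupKey_lt_groupKey_of_not_lt {x y : α} (hxy : ¬ x < y)
    (hfloor : ⌊l y⌋ = ⌊l x⌋ + 1) {s : ℤ} (hs : Even (⌊l x⌋ + s)) :
    groupKey l e s y < groupKey l e s x := by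
  obtain ⟨k, hk⟩ := hs
  have hpx : cellParity l s x = 0 := by unfold cellParity; omega
  have hpy : cellParity l s y = 1 := by unfold cellParity; omega
  have hgroup : (⌊l y⌋ + s) / 2 = (⌊l x⌋ + s) / 2 := by omega
  have hle : l y - 1 ≤ l x := by linarith [not_lt.mp (mt (hl x y).2 hxy)]
  refine Prod.Lex.toLex_lt_toLex.mpr (Or.inr ⟨hgroup, Prod.Lex.toLex_lt_toLex.mpr ?_⟩)
  simp only [hpx, hpy, Int.cast_zero, Int.cast_one, sub_zero]
  rcases hle.lt_or_eq with hlt | heq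
  · exact Or.inl hlt
  · exact Or.inr ⟨heq, Prod.Lex.toLex_lt_toLex.mpr (Or.inl (by norm_num))⟩

theorem exists_key_lt_of_not_le (he : Injective e) {x y : α} (hxy : ¬ x ≤ y) :
    cellKey l e y < cellKey l e x ∨ ∃ s ∈ ({0, 1} : Set ℤ), groupKey l e s y < groupKey l e s x := by
  by_cases hyx : y < x
  · exact Or.inl (cellKey_strictMono hl hyx)
  have hxy' : ¬ x < y := fun h => hxy h.le
  rcases lt_trichotomy ⌊l x⌋ ⌊l y⌋ with hlt | heq | hgt
  · have hfloor : ⌊l y⌋ = ⌊l x⌋ + 1 := le_antisymm (floor_le_floor_add_one hl hxy') hlt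
    right
    rcases Int.even_or_odd ⌊l x⌋ with heven | hodd
    · exact ⟨0, by simp, groupKey_lt_groupKey_of_not_lt hl hxy' hfloor (by simpa using heven)⟩
    · exact ⟨1, by simp, groupKey_lt_groupKey_of_not_lt hl hxy' hfloor hodd.add_one⟩
  · have hne : toLex (l x, e x) ≠ toLex (l y, e y) := fun h =>
      hxy (he (Prod.ext_iff.mp (toLex_inj.mp h)).2).le
    rcases hne.lt_or_gt with hlt | hgt
    · exact Or.inl (Prod.Lex.toLex_lt_toLex.mpr (Or.inr ⟨heq.symm, toDual_lt_toDual.mpr hlt⟩))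
    · exact Or.inr ⟨0, by simp, groupKey_lt_groupKey_of_floor_eq heq.symm hgt 0⟩
  · exact Or.inl (Prod.Lex.toLex_lt_toLex.mpr (Or.inl hgt))

end Semiorder

open Semiorder in
theorem stmt_5_general {α : Type*} [PartialOrder α]
    (h : ∃ l : α → ℝ, ∀ x y : α, x < y ↔ l x + 1 < l y) :
    DimLE α 3 := by
  obtain ⟨l, hl⟩ := h
  let e := embeddingToCardinal (α := α)
  let L : Fin 3 → α → α → Prop := ![fun x y => cellKey l e x ≤ cellKey l e y,
    fun x y => groupKey l e 0 x ≤ groupKey l e 0 y, fun x y => groupKey l e 1 x ≤ groupKey l e 1 y]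
  have hL : ∀ i, IsLinearExtension (L i) := by
    have hgroup (s : ℤ) := isLinearExtension_of_strictMono (groupKey_injective e.injective s)
      (groupKey_strictMono hl s)
    intro i
    fin_cases i
    exacts [isLinearExtension_of_strictMono (cellKey_injective e.injective) (cellKey_strictMono hl),
      hgroup 0, hgroup 1]
  refine ⟨L, hL, fun x y => ⟨fun hxy i => (hL i).2 x y hxy, fun hall => ?_⟩⟩
  by_contra hxy
  rcases exists_key_lt_of_not_le hl e.injective hxy with hcell | ⟨s, rfl | rfl, hgroup⟩
  exacts [(hall 0).not_gt hcell, (hall 1).not_gt hgroup, (hall 2).not_gt hgroup]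

/-- Every finite unit interval order (semiorder) has dimension at most 3. -/
theorem stmt_5 {α : Type*} [Fintype α] [PartialOrder α]
    (h : ∃ l : α → ℝ, ∀ x y : α, x < y ↔ l x + 1 < l y) :
    DimLE α 3 :=
  stmt_5_general h
end

section
/- Every finite unit OC interval order has order dimension at most 3. That is, if P admits a representation where each element x is assigned a unit-length real interval with endpoints l(x) and l(x)+1, each interval being either open or closed, such that x < y in P iff the interval of x lies entirely to the left of (is disjoint from and below) the interval of y, then dim(P) ≤ 3. -/
open Function Set OrderDual

section Realizer

variable {α : Type*} [PartialOrder α]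

theorem isLinearExtension_of_injective_of_strictMono {K : Type*} [LinearOrder K] {f : α → K}
    (hf : Injective f) (hmono : StrictMono f) : IsLinearExtension fun x y => f x ≤ f y :=
  ⟨@instIsLinearOrderLe α (LinearOrder.lift' f hf), fun _ _ h => hmono.monotone h⟩

theorem dimLE_three_of_keys {K₀ K₁ K₂ : Type*} [LinearOrder K₀] [LinearOrder K₁] [LinearOrder K₂]
    {k₀ : α → K₀} {k₁ : α → K₁} {k₂ : α → K₂}
    (hinj₀ : Injective k₀) (hinj₁ : Injective k₁) (hinj₂ : Injective k₂)
    (hmono₀ : StrictMono k₀) (hmono₁ : StrictMono k₁) (hmono₂ : StrictMono k₂)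
    (hcover : ∀ x y, ¬x ≤ y → k₀ y < k₀ x ∨ k₁ y < k₁ x ∨ k₂ y < k₂ x) :
    DimLE α 3 := by
  refine ⟨![fun x y => k₀ x ≤ k₀ y, fun x y => k₁ x ≤ k₁ y, fun x y => k₂ x ≤ k₂ y],
    fun i => ?_, fun x y => ⟨fun hxy i => ?_, fun hall => ?_⟩⟩
  · fin_cases i
    exacts [isLinearExtension_of_injective_of_strictMono hinj₀ hmono₀,
      isLinearExtension_of_injective_of_strictMono hinj₁ hmono₁,
      isLinearExtension_of_injective_of_strictMono hinj₂ hmono₂]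
  · fin_cases i
    exacts [hmono₀.monotone hxy, hmono₁.monotone hxy, hmono₂.monotone hxy]
  · by_contra hxy
    rcases hcover x y hxy with h | h | h
    exacts [(hall 0).not_gt h, (hall 1).not_gt h, (hall 2).not_gt h]

end Realizer

section Blocks

variable {α K J : Type*} (n : α → ℤ) (lo hi : α → K) (ι : α → J)

def blockKey (x : α) : ℤ ×ₗ (K ×ₗ J)ᵒᵈ :=
  toLex (n x, toDual (toLex (hi x, ι x)))

/-- The blocks `n = 2k - p` and `n = 2k - p + 1` form the `k`-th group. -/
def pairKey (p : ℤ) (x : α) : ℤ ×ₗ (K ×ₗ J) :=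
  toLex ((n x + p) / 2, if Even (n x + p) then toLex (hi x, ι x) else toLex (lo x, ι x))

variable {n lo hi ι}

theorem blockKey_injective (hι : Injective ι) : Injective (blockKey n hi ι) := by
  intro x y h
  simp only [blockKey, toLex_inj, Prod.mk.injEq, toDual_inj] at h
  exact hι h.2.2

theorem pairKey_injective (hsep : ∀ x y, hi x ≠ lo y) (hι : Injective ι) (p : ℤ) :
    Injective (pairKey n lo hi ι p) := by
  intro x y h
  simp only [pairKey, toLex_inj, Prod.mk.injEq] at h
  obtain ⟨-, h⟩ := h
  split_ifs at h <;> simp only [toLex_inj, Prod.mk.injEq] at h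
  exacts [hι h.2, (hsep x y h.1).elim, (hsep y x h.1.symm).elim, hι h.2]

variable [LinearOrder K] [LinearOrder J]

theorem pairKey_lt_pairKey_iff_of_div_eq {p : ℤ} {x y : α} (h : (n x + p) / 2 = (n y + p) / 2) :
    pairKey n lo hi ι p x < pairKey n lo hi ι p y ↔
      (if Even (n x + p) then toLex (hi x, ι x) else toLex (lo x, ι x)) <
        (if Even (n y + p) then toLex (hi y, ι y) else toLex (lo y, ι y)) := by
  simp [pairKey, Prod.Lex.toLex_lt_toLex, h]

variable [PartialOrder α]

theorem blockKey_strictMono (hn : StrictMono n) : StrictMono (blockKey n hi ι) :=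
  fun _ _ h => Prod.Lex.toLex_lt_toLex.mpr (Or.inl (hn h))

theorem pairKey_strictMono (hn : StrictMono n) (hrep : ∀ x y, x ≠ y → (x < y ↔ hi x < lo y))
    (p : ℤ) : StrictMono (pairKey n lo hi ι p) := by
  intro x y hxy
  have hnxy := hn hxy
  rcases (Int.ediv_le_ediv two_pos (by omega : n x + p ≤ n y + p)).lt_or_eq with hlt | heq
  · exact Prod.Lex.toLex_lt_toLex.mpr (Or.inl hlt)
  · have hx : Even (n x + p) := by rw [Int.even_iff]; omega
    have hy : ¬Even (n y + p) := by rw [Int.not_even_iff]; omega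
    rw [pairKey_lt_pairKey_iff_of_div_eq heq, if_pos hx, if_neg hy]
    exact Prod.Lex.toLex_lt_toLex.mpr (Or.inl ((hrep x y hxy.ne).mp hxy))

theorem blockKey_lt_or_pairKey_lt (hι : Injective ι) (hn : StrictMono n)
    (hfar : ∀ x y, n x + 2 ≤ n y → x < y) (hrep : ∀ x y, x ≠ y → (x < y ↔ hi x < lo y))
    (hsep : ∀ x y, hi x ≠ lo y) {x y : α} (hxy : ¬x ≤ y) :
    blockKey n hi ι y < blockKey n hi ι x ∨ pairKey n lo hi ι 0 y < pairKey n lo hi ι 0 x ∨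
      pairKey n lo hi ι 1 y < pairKey n lo hi ι 1 x := by
  by_cases hyx : y < x
  · exact Or.inl (blockKey_strictMono hn hyx)
  have hne : x ≠ y := fun h => hxy h.le
  have hnx : n x ≤ n y + 1 := by
    by_contra! h
    exact hyx (hfar y x (by omega))
  have hny : n y ≤ n x + 1 := by
    by_contra! h
    exact hxy (hfar x y (by omega)).le
  obtain ⟨p, hp, hpx⟩ : ∃ p : ℤ, (p = 0 ∨ p = 1) ∧ Even (n x + p) := by
    rcases Int.even_or_odd (n x) with h | h
    · exact ⟨0, Or.inl rfl, by simpa using h⟩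
    · exact ⟨1, Or.inr rfl, h.add_one⟩
  suffices blockKey n hi ι y < blockKey n hi ι x ∨ pairKey n lo hi ι p y < pairKey n lo hi ι p x by
    rcases hp with rfl | rfl <;> tauto
  rcases (by omega : n y < n x ∨ n y = n x ∨ n y = n x + 1) with hlt | heq | hsucc
  · exact Or.inl (Prod.Lex.toLex_lt_toLex.mpr (Or.inl hlt))
  all_goals
    have hdiv : (n y + p) / 2 = (n x + p) / 2 := by rw [Int.even_iff] at hpx; omega
    rw [pairKey_lt_pairKey_iff_of_div_eq hdiv, if_pos hpx]
  · rw [if_pos (heq ▸ hpx)]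
    have hne' : toLex (hi x, ι x) ≠ toLex (hi y, ι y) := fun h =>
      hne (hι (congrArg Prod.snd (toLex_inj.mp h)))
    rcases lt_or_gt_of_ne hne' with h | h
    · left
      simpa [blockKey, Prod.Lex.toLex_lt_toLex, heq] using h
    · exact Or.inr h
  · have hodd : ¬Even (n y + p) := by rw [Int.not_even_iff]; rw [Int.even_iff] at hpx; omega
    rw [if_neg hodd]
    refine Or.inr (Prod.Lex.toLex_lt_toLex.mpr (Or.inl ?_))
    exact lt_of_le_of_ne (not_lt.mp fun h => hxy ((hrep x y hne).mpr h).le) (hsep x y).symm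

theorem dimLE_three_of_blocks (hι : Injective ι) (hn : StrictMono n)
    (hfar : ∀ x y, n x + 2 ≤ n y → x < y) (hrep : ∀ x y, x ≠ y → (x < y ↔ hi x < lo y))
    (hsep : ∀ x y, hi x ≠ lo y) : DimLE α 3 :=
  dimLE_three_of_keys (blockKey_injective hι) (pairKey_injective hsep hι 0)
    (pairKey_injective hsep hι 1) (blockKey_strictMono hn) (pairKey_strictMono hn hrep 0)
    (pairKey_strictMono hn hrep 1) fun _ _ => blockKey_lt_or_pairKey_lt hι hn hfar hrep hsep

end Blocks

section UnitIntervals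

variable {α M : Type*} [PartialOrder α] [LinearOrder M]

theorem dimLE_three_of_unit_intervals (lo hi : α → ℝ ×ₗ M)
    (hunit : ∀ x, (ofLex (hi x)).1 = (ofLex (lo x)).1 + 1)
    (hrep : ∀ x y, x ≠ y → (x < y ↔ hi x < lo y)) (hsep : ∀ x y, hi x ≠ lo y) :
    DimLE α 3 := by
  set l : α → ℝ := fun x => (ofLex (lo x)).1
  have hn : StrictMono fun x => ⌊l x⌋ := by
    intro x y hxy
    have h := Prod.Lex.monotone_fst _ _ ((hrep x y hxy.ne).mp hxy).le
    rw [hunit] at h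
    rw [← Int.add_one_le_iff, ← Int.floor_add_one]
    exact Int.floor_mono h
  have hfar : ∀ x y, ⌊l x⌋ + 2 ≤ ⌊l y⌋ → x < y := by
    intro x y h
    have hne : x ≠ y := by rintro rfl; omega
    refine (hrep x y hne).mpr (Prod.Lex.lt_iff.mpr (Or.inl ?_))
    have h' : (⌊l x⌋ : ℝ) + 2 ≤ ⌊l y⌋ := by exact_mod_cast h
    rw [hunit]
    linarith [Int.lt_floor_add_one (l x), Int.floor_le (l y)]
  exact dimLE_three_of_blocks embeddingToCardinal.injective hn hfar hrep hsep

end UnitIntervals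

theorem add_one_le_of_forall_Ioo_lt {a b : ℝ}
    (h : ∀ s ∈ Ioo a (a + 1), ∀ t ∈ Ioo b (b + 1), s < t) : a + 1 ≤ b := by
  by_contra! hba
  set e := min (a + 1 - b) 1 / 2 with he_def
  have he : 0 < e := by positivity
  have he' : e ≤ 1 / 2 := by rw [he_def]; linarith [min_le_right (a + 1 - b) 1]
  have h2e : 2 * e ≤ a + 1 - b := by rw [he_def]; linarith [min_le_left (a + 1 - b) 1]
  have := h (a + 1 - e) ⟨by linarith, by linarith⟩ (b + e) ⟨by linarith, by linarith⟩
  linarith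

section OpenClosed

variable {α : Type*}

open Classical in
/-- `l x ∈ I x` tests whether `I x` is closed. Over a real point the tags order the four kinds of
endpoints as: open right end < closed left end < closed right end < open left end. -/
noncomputable def ocLeft (l : α → ℝ) (I : α → Set ℝ) (x : α) : ℝ ×ₗ ℕ :=
  toLex (l x, if l x ∈ I x then 1 else 3)

open Classical in
noncomputable def ocRight (l : α → ℝ) (I : α → Set ℝ) (x : α) : ℝ ×ₗ ℕ :=
  toLex (l x + 1, if l x ∈ I x then 2 else 0)

theorem ocRight_ne_ocLeft (l : α → ℝ) (I : α → Set ℝ) (x y : α) :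
    ocRight l I x ≠ ocLeft l I y := by
  intro h
  have := congrArg (fun p => (ofLex p).2) h
  simp only [ocRight, ocLeft, ofLex_toLex] at this
  split_ifs at this <;> omega

theorem forall_mem_lt_iff_ocRight_lt_ocLeft {l : α → ℝ} {I : α → Set ℝ}
    (hI : ∀ x, I x = Ioo (l x) (l x + 1) ∨ I x = Icc (l x) (l x + 1)) (x y : α) :
    (∀ s ∈ I x, ∀ t ∈ I y, s < t) ↔ ocRight l I x < ocLeft l I y := by
  have hfacts : ∀ z, Ioo (l z) (l z + 1) ⊆ I z ∧ I z ⊆ Icc (l z) (l z + 1) ∧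
      (l z ∈ I z → l z + 1 ∈ I z) ∧ (l z ∉ I z → I z ⊆ Ioo (l z) (l z + 1)) := by
    intro z
    rcases hI z with h | h <;> rw [h] <;> simp [Ioo_subset_Icc_self]
  obtain ⟨hx₁, hx₂, hx₃, hx₄⟩ := hfacts x
  obtain ⟨hy₁, hy₂, -, hy₄⟩ := hfacts y
  simp only [ocRight, ocLeft, Prod.Lex.toLex_lt_toLex]
  constructor
  · intro h
    rcases (add_one_le_of_forall_Ioo_lt fun s hs t ht => h s (hx₁ hs) t (hy₁ ht)).lt_or_eq
      with hlt | heq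
    · exact Or.inl hlt
    · refine Or.inr ⟨heq, ?_⟩
      split_ifs with cx cy
      · exact absurd (h _ (hx₃ cx) _ cy) heq.not_lt
      all_goals norm_num
  · rintro (hlt | ⟨heq, htag⟩) s hs t ht
    · linarith [(hx₂ hs).2, (hy₂ ht).1]
    · split_ifs at htag with cx cy
      · norm_num at htag
      · linarith [(hx₂ hs).2, (hy₄ cy ht).1]
      all_goals linarith [(hx₄ cx hs).2, (hy₂ ht).1]

end OpenClosed

theorem stmt_6_general {α : Type*} [PartialOrder α]
    (h : ∃ (l : α → ℝ) (I : α → Set ℝ),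
      (∀ x, I x = Set.Ioo (l x) (l x + 1) ∨ I x = Set.Icc (l x) (l x + 1)) ∧
      ∀ x y : α, x ≠ y → (x < y ↔ ∀ s ∈ I x, ∀ t ∈ I y, s < t)) :
    DimLE α 3 := by
  obtain ⟨l, I, hI, hrep⟩ := h
  refine dimLE_three_of_unit_intervals (ocLeft l I) (ocRight l I) (fun _ => rfl)
    (fun x y hxy => ?_) (ocRight_ne_ocLeft l I)
  rw [hrep x y hxy, forall_mem_lt_iff_ocRight_lt_ocLeft hI]

/-- Every finite unit OC interval order has dimension at most 3: each element gets a
unit interval that is either open or closed, and for distinct `x, y` we have `x < y`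
iff every point of the interval of `x` is less than every point of the interval of `y`. -/
theorem stmt_6 {α : Type*} [Fintype α] [PartialOrder α]
    (h : ∃ (l : α → ℝ) (I : α → Set ℝ),
      (∀ x, I x = Set.Ioo (l x) (l x + 1) ∨ I x = Set.Icc (l x) (l x + 1)) ∧
      ∀ x y : α, x ≠ y → (x < y ↔ ∀ s ∈ I x, ∀ t ∈ I y, s < t)) :
    DimLE α 3 :=
  stmt_6_general h
end

section
/- For every fixed positive real r, every finite interval order having a representation by closed intervals each of length 0 or length r has order dimension at most 3. -/
open Finset Function

theorem dimLE_of_keys {α β : Type*} [PartialOrder α] [LinearOrder β] {t : ℕ}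
    (f : Fin t → α → β) (hinj : ∀ i, Injective (f i)) (hmono : ∀ i, StrictMono (f i))
    (hrev : ∀ x y, ¬ x ≤ y → ∃ i, f i y < f i x) : DimLE α t := by
  refine ⟨fun i x y => f i x ≤ f i y, fun i => ⟨?_, fun x y hxy => (hmono i).monotone hxy⟩,
    fun x y => ⟨fun hxy i => (hmono i).monotone hxy, fun h => ?_⟩⟩
  · exact { refl := fun _ => le_rfl, trans := fun _ _ _ => le_trans,
            antisymm := fun _ _ h₁ h₂ => hinj i (le_antisymm h₁ h₂),
            total := fun _ _ => le_total _ _ }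
  · by_contra hxy
    obtain ⟨i, hi⟩ := hrev x y hxy
    exact not_lt.2 (h i) hi

theorem exists_separated_stabbing {c : ℝ} (hc : 0 ≤ c) (U : Finset ℝ) :
    ∃ P ⊆ U, (∀ p ∈ P, ∀ q ∈ P, p < q → p + c < q) ∧
      ∀ v ∈ U, ∃ p ∈ P, v - c ≤ p ∧ p ≤ v := by
  induction U using Finset.strongInduction with
  | H U ih =>
  rcases U.eq_empty_or_nonempty with rfl | hU
  · exact ⟨∅, empty_subset _, by simp, by simp⟩
  set m := U.min' hU
  obtain ⟨P, hPU, hsep, hcov⟩ :=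
    ih (U.filter (m + c < ·)) (filter_ssubset.2 ⟨m, U.min'_mem hU, by simp [hc]⟩)
  refine ⟨insert m P, insert_subset (U.min'_mem hU) (hPU.trans (filter_subset _ _)), ?_, ?_⟩
  · intro p hp q hq hpq
    rw [mem_insert] at hp hq
    rcases hp with rfl | hp <;> rcases hq with rfl | hq
    · exact absurd hpq (lt_irrefl _)
    · exact (mem_filter.1 (hPU hq)).2
    · exact absurd hpq (not_lt.2 (U.min'_le _ (mem_filter.1 (hPU hp)).1))
    · exact hsep p hp q hq hpq
  · intro v hv
    by_cases hmv : m + c < v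
    · obtain ⟨p, hp, hpv⟩ := hcov v (mem_filter.2 ⟨hv, hmv⟩)
      exact ⟨p, mem_insert_of_mem hp, hpv⟩
    · exact ⟨m, mem_insert_self _ _, by linarith, U.min'_le v hv⟩

section Stabbing

/-- Meaningful only when some element of `P` is `≤ v`; otherwise it is `sSup ∅ = 0`. -/
noncomputable def greatestLE (P : Finset ℝ) (v : ℝ) : ℝ := sSup (P.filter (· ≤ v) : Set ℝ)

noncomputable def countLE (P : Finset ℝ) (v : ℝ) : ℕ := #(P.filter (· ≤ v))

variable {P : Finset ℝ} {p v w : ℝ}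

theorem le_greatestLE (hp : p ∈ P) (hpv : p ≤ v) : p ≤ greatestLE P v :=
  le_csSup (P.filter _).bddAbove (by simpa using And.intro hp hpv)

theorem greatestLE_mem (hv : (P.filter (· ≤ v)).Nonempty) :
    greatestLE P v ∈ P.filter (· ≤ v) :=
  hv.csSup_mem

theorem countLE_greatestLE (hv : (P.filter (· ≤ v)).Nonempty) :
    countLE P (greatestLE P v) = countLE P v := by
  have hle := (mem_filter.1 (greatestLE_mem hv)).2
  unfold countLE
  congr 1
  ext q
  simp only [mem_filter, and_congr_right_iff]
  exact fun hq => ⟨fun h => h.trans hle, le_greatestLE hq⟩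

theorem countLE_lt_countLE (hp : p ∈ P) (hvp : v < p) (hpw : p ≤ w) :
    countLE P v < countLE P w := by
  refine card_lt_card ((ssubset_iff_of_subset fun q hq => ?_).2
    ⟨p, mem_filter.2 ⟨hp, hpw⟩, fun h => not_lt.2 (mem_filter.1 h).2 hvp⟩)
  obtain ⟨hq, hqv⟩ := mem_filter.1 hq
  exact mem_filter.2 ⟨hq, by linarith⟩

theorem countLE_le_countLE_add_one {c : ℝ} (hsep : ∀ p ∈ P, ∀ q ∈ P, p < q → p + c < q)
    (hwv : w ≤ v + c) : countLE P w ≤ countLE P v + 1 := by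
  have hsub : P.filter (· ≤ w) ⊆ P.filter (· ≤ v) ∪ P.filter (fun p => v < p ∧ p ≤ w) := by
    intro p hp
    obtain ⟨hp, hpw⟩ := mem_filter.1 hp
    rcases le_or_gt p v with hpv | hpv
    · exact mem_union_left _ (mem_filter.2 ⟨hp, hpv⟩)
    · exact mem_union_right _ (mem_filter.2 ⟨hp, hpv, hpw⟩)
  have hone : #(P.filter (fun p => v < p ∧ p ≤ w)) ≤ 1 := by
    refine card_le_one.2 fun p hp q hq => ?_
    obtain ⟨hp, hvp, hpw⟩ := mem_filter.1 hp
    obtain ⟨hq, hvq, hqw⟩ := mem_filter.1 hq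
    by_contra hne
    rcases lt_or_gt_of_ne hne with h | h
    · linarith [hsep p hp q hq h]
    · linarith [hsep q hq p hp h]
  calc countLE P w ≤ #(P.filter (· ≤ v) ∪ P.filter (fun p => v < p ∧ p ≤ w)) :=
        card_le_card hsub
    _ ≤ countLE P v + 1 := (card_union_le _ _).trans (by unfold countLE; omega)

/-- Stabbing points of distinct overlapping blocks are consecutive in `P`. -/
theorem countLE_greatestLE_eq_succ {c : ℝ} (hsep : ∀ p ∈ P, ∀ q ∈ P, p < q → p + c < q)
    (hv : (P.filter (· ≤ v)).Nonempty) (hw : (P.filter (· ≤ w)).Nonempty) (hwv : w ≤ v + c)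
    (hlt : greatestLE P v < greatestLE P w) :
    countLE P (greatestLE P w) = countLE P (greatestLE P v) + 1 := by
  obtain ⟨hwP, hww⟩ := mem_filter.1 (greatestLE_mem hw)
  refine le_antisymm ?_ (countLE_lt_countLE hwP hlt le_rfl)
  calc countLE P (greatestLE P w) ≤ countLE P v + 1 :=
        countLE_le_countLE_add_one hsep (by linarith)
    _ = countLE P (greatestLE P v) + 1 := by rw [countLE_greatestLE hv]

end Stabbing

section PinnedKey

variable {α : Type*} {l r θ k : α → ℝ} {x y : α}

def pinnedKey (l r θ k : α → ℝ) (x : α) : ℝ ×ₗ ℝ ×ₗ ℝ :=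
  toLex (θ x, toLex (-(l x + r x), k x))

theorem pinnedKey_lt_of_lt (hθ : θ y < θ x) : pinnedKey l r θ k y < pinnedKey l r θ k x :=
  Prod.Lex.toLex_lt_toLex.2 (Or.inl hθ)

theorem pinnedKey_strictMono [Preorder α] (hrep : ∀ x y, x < y → r x < l y)
    (hθ : ∀ x, l x ≤ θ x ∧ θ x ≤ r x) : StrictMono (pinnedKey l r θ k) := fun x y hxy =>
  pinnedKey_lt_of_lt (by linarith [hθ x, hθ y, hrep x y hxy])

theorem pinnedKey_injective (hk : Injective k) : Injective (pinnedKey l r θ k) :=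
  fun x y h => hk (by simpa [pinnedKey] using congrArg (fun z => (ofLex (ofLex z).2).2) h)

theorem pinnedKey_lt_of_le (hθ : θ y ≤ θ x) (hsum : θ y = θ x → l x + r x < l y + r y) :
    pinnedKey l r θ k y < pinnedKey l r θ k x := by
  rcases hθ.lt_or_eq with h | h
  · exact pinnedKey_lt_of_lt h
  · exact Prod.Lex.toLex_lt_toLex.2
      (Or.inr ⟨h, Prod.Lex.toLex_lt_toLex.2 (Or.inl (by linarith [hsum h]))⟩)

theorem pinnedKey_lt_of_eq (hθ : θ y = θ x) (hsum : l y + r y = l x + r x) (hk : k y < k x) :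
    pinnedKey l r θ k y < pinnedKey l r θ k x :=
  Prod.Lex.toLex_lt_toLex.2
    (Or.inr ⟨hθ, Prod.Lex.toLex_lt_toLex.2 (Or.inr ⟨by rw [hsum], hk⟩)⟩)

end PinnedKey

section ThreeKeys

variable {α : Type*} (P : Finset ℝ) (l r : α → ℝ) (c : ℝ)

noncomputable def blockPin (x : α) : ℝ :=
  if r x - l x = c then greatestLE P (r x) else l x

def IsEarly (e : Bool) (x : α) : Prop :=
  r x - l x = c ∧ (countLE P (greatestLE P (r x))).bodd = e

open Classical in
noncomputable def parityPin (e : Bool) (x : α) : ℝ :=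
  if IsEarly P l r c e x then r x else l x

noncomputable def threeKeys (k : α → ℝ) : Fin 3 → α → ℝ ×ₗ ℝ ×ₗ ℝ :=
  ![pinnedKey l r (blockPin P l r c) (-k), pinnedKey l r (parityPin P l r c false) k,
    pinnedKey l r (parityPin P l r c true) k]

variable {P l r c} {k : α → ℝ}

theorem exists_threeKeys_lt_of_parityPin {x y : α} (e : Bool)
    (h : pinnedKey l r (parityPin P l r c e) k y < pinnedKey l r (parityPin P l r c e) k x) :
    ∃ i, threeKeys P l r c k i y < threeKeys P l r c k i x := by
  cases e
  exacts [⟨1, h⟩, ⟨2, h⟩]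

theorem threeKeys_injective (hk : Injective k) (i : Fin 3) :
    Injective (threeKeys P l r c k i) := by
  fin_cases i
  exacts [pinnedKey_injective (neg_injective.comp hk), pinnedKey_injective hk,
    pinnedKey_injective hk]

theorem blockPin_mem_Icc (hlen : ∀ x, r x - l x = 0 ∨ r x - l x = c)
    (hcover : ∀ x, r x - l x = c → ∃ p ∈ P, l x ≤ p ∧ p ≤ r x) (x : α) :
    l x ≤ blockPin P l r c x ∧ blockPin P l r c x ≤ r x := by
  unfold blockPin
  split_ifs with hx
  · obtain ⟨p, hp, hlp, hpr⟩ := hcover x hx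
    exact ⟨hlp.trans (le_greatestLE hp hpr),
      (mem_filter.1 (greatestLE_mem ⟨p, mem_filter.2 ⟨hp, hpr⟩⟩)).2⟩
  · have := (hlen x).resolve_right hx
    constructor <;> linarith

theorem parityPin_mem_Icc (hc : 0 ≤ c) (hlen : ∀ x, r x - l x = 0 ∨ r x - l x = c)
    (e : Bool) (x : α) : l x ≤ parityPin P l r c e x ∧ parityPin P l r c e x ≤ r x := by
  have : l x ≤ r x := by rcases hlen x with h | h <;> linarith
  unfold parityPin
  split_ifs <;> constructor <;> linarith

theorem threeKeys_strictMono [Preorder α] (hc : 0 ≤ c)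
    (hlen : ∀ x, r x - l x = 0 ∨ r x - l x = c) (hrep : ∀ x y, x < y → r x < l y)
    (hcover : ∀ x, r x - l x = c → ∃ p ∈ P, l x ≤ p ∧ p ≤ r x) (i : Fin 3) :
    StrictMono (threeKeys P l r c k i) := by
  fin_cases i
  exacts [pinnedKey_strictMono hrep (blockPin_mem_Icc hlen hcover),
    pinnedKey_strictMono hrep (parityPin_mem_Icc hc hlen false),
    pinnedKey_strictMono hrep (parityPin_mem_Icc hc hlen true)]

theorem exists_threeKeys_lt_of_points (hc : 0 < c) (hk : Injective k) {x y : α} (hne : x ≠ y)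
    (hx : r x - l x = 0) (hy : r y - l y = 0) (hyx : l y ≤ r x) (hxy : l x ≤ r y) :
    ∃ i, threeKeys P l r c k i y < threeKeys P l r c k i x := by
  have hxu : r x - l x ≠ c := by linarith
  have hyu : r y - l y ≠ c := by linarith
  have hl : l y = l x := by linarith
  have hsum : l y + r y = l x + r x := by linarith
  rcases (hk.ne hne).lt_or_gt with hk' | hk'
  · refine ⟨0, pinnedKey_lt_of_eq ?_ hsum (neg_lt_neg hk')⟩
    rw [show blockPin P l r c y = l y from if_neg hyu,
      show blockPin P l r c x = l x from if_neg hxu, hl]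
  · refine exists_threeKeys_lt_of_parityPin false (pinnedKey_lt_of_eq ?_ hsum hk')
    rw [show parityPin P l r c false y = l y from if_neg fun h => hyu h.1,
      show parityPin P l r c false x = l x from if_neg fun h => hxu h.1, hl]

theorem exists_threeKeys_lt_of_unit_point (hc : 0 < c) {x y : α} (hx : r x - l x = c)
    (hy : r y - l y = 0) (hyx : l y ≤ r x) :
    ∃ i, threeKeys P l r c k i y < threeKeys P l r c k i x := by
  set e := (countLE P (greatestLE P (r x))).bodd
  have hxe : IsEarly P l r c e x := ⟨hx, rfl⟩
  have hye : ¬ IsEarly P l r c e y := fun h => by linarith [h.1]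
  have hpin : parityPin P l r c e y = l y ∧ parityPin P l r c e x = r x :=
    ⟨if_neg hye, if_pos hxe⟩
  refine exists_threeKeys_lt_of_parityPin e (pinnedKey_lt_of_le ?_ fun h => ?_)
  · rw [hpin.1, hpin.2]
    exact hyx
  · rw [hpin.1, hpin.2] at h
    linarith

theorem exists_threeKeys_lt_of_point_unit (hc : 0 < c) {x y : α} (hx : r x - l x = 0)
    (hy : r y - l y = c) (hyx : l y ≤ r x) :
    ∃ i, threeKeys P l r c k i y < threeKeys P l r c k i x := by
  set e := !(countLE P (greatestLE P (r y))).bodd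
  have hxe : ¬ IsEarly P l r c e x := fun h => by linarith [h.1]
  have hye : ¬ IsEarly P l r c e y := fun h => Bool.eq_not_self _ |>.1 h.2
  have hpin : parityPin P l r c e y = l y ∧ parityPin P l r c e x = l x :=
    ⟨if_neg hye, if_neg hxe⟩
  refine exists_threeKeys_lt_of_parityPin e (pinnedKey_lt_of_le ?_ fun h => ?_)
  · rw [hpin.1, hpin.2]
    linarith
  · rw [hpin.1, hpin.2] at h
    linarith

theorem exists_threeKeys_lt_of_units (hc : 0 < c)
    (hsep : ∀ p ∈ P, ∀ q ∈ P, p < q → p + c < q)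
    (hcover : ∀ x, r x - l x = c → ∃ p ∈ P, l x ≤ p ∧ p ≤ r x) (hk : Injective k)
    {x y : α} (hne : x ≠ y) (hx : r x - l x = c) (hy : r y - l y = c) (hyx : l y ≤ r x) :
    ∃ i, threeKeys P l r c k i y < threeKeys P l r c k i x := by
  obtain ⟨p, hp, -, hpr⟩ := hcover x hx
  obtain ⟨q, hq, -, hqr⟩ := hcover y hy
  have hbx : blockPin P l r c x = greatestLE P (r x) := if_pos hx
  have hby : blockPin P l r c y = greatestLE P (r y) := if_pos hy
  rcases lt_trichotomy (greatestLE P (r x)) (greatestLE P (r y)) with hlt | heq | hgt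
  · have hsucc := countLE_greatestLE_eq_succ hsep ⟨p, mem_filter.2 ⟨hp, hpr⟩⟩
      ⟨q, mem_filter.2 ⟨hq, hqr⟩⟩ (by linarith) hlt
    set e := (countLE P (greatestLE P (r x))).bodd
    have hxe : IsEarly P l r c e x := ⟨hx, rfl⟩
    have hye : ¬ IsEarly P l r c e y := fun h => by
      simpa [hsucc, e] using h.2
    have hpin : parityPin P l r c e y = l y ∧ parityPin P l r c e x = r x :=
      ⟨if_neg hye, if_pos hxe⟩
    refine exists_threeKeys_lt_of_parityPin e (pinnedKey_lt_of_le ?_ fun h => ?_)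
    · rw [hpin.1, hpin.2]
      exact hyx
    · rw [hpin.1, hpin.2] at h
      linarith
  · have hE : ∀ e, IsEarly P l r c e x ↔ IsEarly P l r c e y := fun e => by
      simp only [IsEarly, hx, hy, heq]
    rcases lt_trichotomy (l x) (l y) with hl | hl | hl
    · exact ⟨0, pinnedKey_lt_of_le (by rw [hbx, hby, heq]) fun _ => by linarith⟩
    · have hsum : l y + r y = l x + r x := by linarith
      rcases (hk.ne hne).lt_or_gt with hk' | hk'
      · exact ⟨0, pinnedKey_lt_of_eq (by rw [hbx, hby, heq]) hsum (neg_lt_neg hk')⟩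
      · refine exists_threeKeys_lt_of_parityPin false (pinnedKey_lt_of_eq ?_ hsum hk')
        have hr : r x = r y := by linarith
        classical
        simp only [parityPin, hE, hl, hr]
    · refine exists_threeKeys_lt_of_parityPin false (pinnedKey_lt_of_lt ?_)
      classical
      simp only [parityPin, hE]
      split_ifs <;> linarith
  · exact ⟨0, pinnedKey_lt_of_lt (by rw [hbx, hby]; exact hgt)⟩

theorem exists_threeKeys_lt_of_not_le [PartialOrder α] (hc : 0 < c)
    (hlen : ∀ x, r x - l x = 0 ∨ r x - l x = c) (hrep : ∀ x y, x < y ↔ r x < l y)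
    (hsep : ∀ p ∈ P, ∀ q ∈ P, p < q → p + c < q)
    (hcover : ∀ x, r x - l x = c → ∃ p ∈ P, l x ≤ p ∧ p ≤ r x) (hk : Injective k)
    {x y : α} (h : ¬ x ≤ y) : ∃ i, threeKeys P l r c k i y < threeKeys P l r c k i x := by
  by_cases hyx : y < x
  · exact ⟨0, threeKeys_strictMono hc.le hlen (fun x y => (hrep x y).1) hcover 0 hyx⟩
  have hne : x ≠ y := by
    rintro rfl
    exact h le_rfl
  have hlr : l y ≤ r x := not_lt.1 fun h' => h ((hrep x y).2 h').le
  have hrl : l x ≤ r y := not_lt.1 fun h' => hyx ((hrep y x).2 h')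
  rcases hlen x with hx | hx <;> rcases hlen y with hy | hy
  · exact exists_threeKeys_lt_of_points hc hk hne hx hy hlr hrl
  · exact exists_threeKeys_lt_of_point_unit hc hx hy hlr
  · exact exists_threeKeys_lt_of_unit_point hc hx hy hlr
  · exact exists_threeKeys_lt_of_units hc hsep hcover hk hne hx hy hlr

theorem dimLE_three_of_separated_stabbing [PartialOrder α] (hc : 0 < c)
    (hlen : ∀ x, r x - l x = 0 ∨ r x - l x = c) (hrep : ∀ x y, x < y ↔ r x < l y)
    (hsep : ∀ p ∈ P, ∀ q ∈ P, p < q → p + c < q)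
    (hcover : ∀ x, r x - l x = c → ∃ p ∈ P, l x ≤ p ∧ p ≤ r x) (hk : Injective k) :
    DimLE α 3 :=
  dimLE_of_keys (threeKeys P l r c k) (threeKeys_injective hk)
    (threeKeys_strictMono hc.le hlen (fun x y => (hrep x y).1) hcover)
    fun _ _ => exists_threeKeys_lt_of_not_le hc hlen hrep hsep hcover hk

end ThreeKeys

/-- For any fixed positive real `c`, every finite interval order representable by
closed intervals each of length 0 or `c` has dimension at most 3. -/
theorem stmt_8 {α : Type*} [Fintype α] [PartialOrder α] (c : ℝ) (hc : 0 < c)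
    (h : ∃ l r : α → ℝ, (∀ x, r x - l x = 0 ∨ r x - l x = c) ∧
      ∀ x y : α, x < y ↔ r x < l y) :
    DimLE α 3 := by
  classical
  obtain ⟨l, r, hlen, hrep⟩ := h
  obtain ⟨P, -, hsep, hcover⟩ :=
    exists_separated_stabbing hc.le ((univ.filter fun x => r x - l x = c).image r)
  refine dimLE_three_of_separated_stabbing hc hlen hrep hsep (fun x hx => ?_)
    ((Nat.cast_injective.comp Fin.val_injective).comp (Fintype.equivFin α).injective)
  obtain ⟨p, hp, hlp, hpr⟩ := hcover (r x) (mem_image_of_mem r (by simpa using hx))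
  exact ⟨p, hp, by linarith, hpr⟩
end

section
/- Let Q be a finite unit interval order with a fixed open unit interval representation, and let A_1, A_2, ..., A_t be the partition of Q into antichains obtained by successively removing the set of minimal elements. Then for any a ∈ A_i and b ∈ A_{i+2}, we have a < b in Q. -/
/-!
If `b` survives `i + 2` rounds, there is a chain `z < y < b` with `z` surviving `i` rounds.
Since `a` is minimal after `i` rounds, `z` is not below `a`, so in the unit interval
representation `l a < l z + 1 ≤ l y ≤ l b - 1`, that is, `a < b`.
-/

/-- What remains of the subset `Q` of a poset after `n` rounds of removing the
minimal elements. -/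
def rest {α : Type*} [PartialOrder α] (Q : Set α) : ℕ → Set α
  | 0 => Q
  | n + 1 => {x ∈ rest Q n | ∃ y ∈ rest Q n, y < x}

/-- The `n`-th antichain in the partition of `Q` obtained by successively removing
minimal elements: the minimal elements of what remains after `n` rounds. -/
def layer {α : Type*} [PartialOrder α] (Q : Set α) (n : ℕ) : Set α :=
  {x ∈ rest Q n | ∀ y ∈ rest Q n, ¬ y < x}

section

variable {α : Type*} [PartialOrder α] {Q : Set α}

theorem exists_lt_lt_of_mem_rest_add_two {n : ℕ} {b : α} (hb : b ∈ rest Q (n + 2)) :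
    ∃ z ∈ rest Q n, ∃ y, z < y ∧ y < b := by
  obtain ⟨-, y, ⟨-, z, hz, hzy⟩, hyb⟩ := hb
  exact ⟨z, hz, y, hzy, hyb⟩

theorem lt_of_mem_layer_of_mem_rest_add_two {l : α → ℝ} (hl : ∀ x y : α, x < y ↔ l x + 1 ≤ l y)
    {n : ℕ} {a b : α} (ha : a ∈ layer Q n) (hb : b ∈ rest Q (n + 2)) : a < b := by
  obtain ⟨z, hz, y, hzy, hyb⟩ := exists_lt_lt_of_mem_rest_add_two hb
  have hza : ¬ l z + 1 ≤ l a := (hl z a).not.mp (ha.2 z hz)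
  rw [hl] at hzy hyb ⊢
  linarith

end

theorem stmt_10_general {α : Type*} [PartialOrder α]
    (h : ∃ l : α → ℝ, ∀ x y : α, x < y ↔ l x + 1 ≤ l y)
    (i : ℕ) (a b : α) (ha : a ∈ layer (Set.univ : Set α) i)
    (hb : b ∈ layer (Set.univ : Set α) (i + 2)) :
    a < b := by
  obtain ⟨l, hl⟩ := h
  exact lt_of_mem_layer_of_mem_rest_add_two hl ha hb.1

/-- For a finite unit interval order with an open unit interval representation,
any element of a layer is below every element two layers later. -/
theorem stmt_10 {α : Type*} [Fintype α] [PartialOrder α]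
    (h : ∃ l : α → ℝ, ∀ x y : α, x < y ↔ l x + 1 ≤ l y)
    (i : ℕ) (a b : α) (ha : a ∈ layer (Set.univ : Set α) i)
    (hb : b ∈ layer (Set.univ : Set α) (i + 2)) :
    a < b :=
  stmt_10_general h i a b ha hb
end

section
/- Every finite interval order P that has a representation in which the set of interval lengths has cardinality at most r satisfies dim(P) ≤ 3r + C(r,2). -/
namespace Stmt15
open Finset
open scoped Classical

variable {α : Type*} [Fintype α] [PartialOrder α]

variable (l g : α → ℝ)

/-- Chains of elements of the `d`-class strictly below `x`. -/
noncomputable def chainsBelow (d : ℝ) (x : α) : Finset (Finset α) :=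
  ((univ.filter (fun z => g z - l z = d ∧ z < x)).powerset).filter
    (fun C => ∀ a ∈ C, ∀ b ∈ C, a ≤ b ∨ b ≤ a)

/-- Height of `x` over the `d`-class. -/
noncomputable def htd (d : ℝ) (x : α) : ℕ := (chainsBelow l g d x).sup Finset.card

lemma empty_mem_chainsBelow (d : ℝ) (x : α) : ∅ ∈ chainsBelow l g d x := by
  simp [chainsBelow]

lemma mem_chainsBelow {d : ℝ} {x : α} {C : Finset α} :
    C ∈ chainsBelow l g d x ↔
      (∀ w ∈ C, (g w - l w = d ∧ w < x)) ∧ (∀ a ∈ C, ∀ b ∈ C, a ≤ b ∨ b ≤ a) := by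
  simp only [chainsBelow, mem_filter, mem_powerset]
  constructor
  · rintro ⟨h1, h2⟩
    exact ⟨fun w hw => by simpa using (mem_filter.mp (h1 hw)).2, h2⟩
  · rintro ⟨h1, h2⟩
    exact ⟨fun w hw => mem_filter.mpr ⟨mem_univ w, h1 w hw⟩, h2⟩

lemma exists_chain_card (d : ℝ) (x : α) :
    ∃ C ∈ chainsBelow l g d x, htd l g d x = C.card :=
  Finset.exists_mem_eq_sup _ ⟨∅, empty_mem_chainsBelow l g d x⟩ _

lemma card_le_htd {d : ℝ} {x : α} {C : Finset α} (hC : C ∈ chainsBelow l g d x) :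
    C.card ≤ htd l g d x := Finset.le_sup hC

/-- (H2') : if `z` in the class is strictly below `x`, its height is smaller. -/
lemma htd_lt {d : ℝ} {z x : α} (hz : g z - l z = d) (hzx : z < x) :
    htd l g d z < htd l g d x := by
  obtain ⟨C, hC, hcard⟩ := exists_chain_card l g d z
  rw [mem_chainsBelow] at hC
  have hznC : z ∉ C := fun hzC => lt_irrefl z (hC.1 z hzC).2
  have hmem : insert z C ∈ chainsBelow l g d x := by
    rw [mem_chainsBelow]
    refine ⟨?_, ?_⟩
    · intro w hw
      rcases Finset.mem_insert.mp hw with rfl | hwC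
      · exact ⟨hz, hzx⟩
      · exact ⟨(hC.1 w hwC).1, lt_trans (hC.1 w hwC).2 hzx⟩
    · intro a ha b hb
      rcases Finset.mem_insert.mp ha with rfl | haC
      · rcases Finset.mem_insert.mp hb with rfl | hbC
        · exact Or.inl le_rfl
        · exact Or.inr (le_of_lt (hC.1 b hbC).2)
      · rcases Finset.mem_insert.mp hb with rfl | hbC
        · exact Or.inl (le_of_lt (hC.1 a haC).2)
        · exact hC.2 a haC b hbC
  have := card_le_htd l g hmem
  rw [Finset.card_insert_of_notMem hznC] at this
  omega

/-- (H1) monotonicity of height in the left endpoint. -/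
lemma htd_mono (hiff : ∀ x y : α, x < y ↔ g x < l y) {d : ℝ} {z x : α} (hzx : l z ≤ l x) :
    htd l g d z ≤ htd l g d x := by
  apply Finset.sup_le
  intro C hC
  apply card_le_htd l g
  rw [mem_chainsBelow] at hC ⊢
  refine ⟨fun w hw => ⟨(hC.1 w hw).1, ?_⟩, hC.2⟩
  have hwz := (hC.1 w hw).2
  rw [hiff] at hwz ⊢
  linarith

/-- (M4) incomparable same-class elements have heights within 1. -/
lemma htd_le_succ (hlg : ∀ x, l x ≤ g x) (hiff : ∀ x y : α, x < y ↔ g x < l y) {d : ℝ} {u v : α} (hu : g u - l u = d) (hv : g v - l v = d)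
    (huv : ¬ u < v) : htd l g d v ≤ htd l g d u + 1 := by
  have hlyx0 : l v ≤ g u := by
    have hnc : ¬ (g u < l v) := fun hc => huv ((hiff u v).mpr hc)
    exact le_of_not_gt hnc
  clear huv
  by_contra hcon
  push_neg at hcon
  obtain ⟨C, hC, hcard⟩ := exists_chain_card l g d v
  rw [mem_chainsBelow] at hC
  have hCne : C.Nonempty := by
    rw [← Finset.card_pos, ← hcard]; omega
  obtain ⟨m, hmC, hmax⟩ := Finset.exists_max_image C l hCne
  have hmlt : ∀ w ∈ C, w ≤ m := by
    intro w hw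
    rcases hC.2 w hw m hmC with h | h
    · exact h
    · rcases eq_or_lt_of_le h with rfl | hlt
      · exact le_rfl
      · exfalso
        rw [hiff] at hlt
        have := hmax w hw
        have := hlg m
        linarith
  -- the erased chain sits below m
  have herase : C.erase m ∈ chainsBelow l g d m := by
    rw [mem_chainsBelow]
    refine ⟨?_, ?_⟩
    · intro w hw
      have hwC := Finset.mem_of_mem_erase hw
      refine ⟨(hC.1 w hwC).1, ?_⟩
      exact lt_of_le_of_ne (hmlt w hwC) (Finset.ne_of_mem_erase hw)
    · intro a ha b hb
      exact hC.2 a (Finset.mem_of_mem_erase ha) b (Finset.mem_of_mem_erase hb)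
  have h1 : C.card - 1 ≤ htd l g d m := by
    have := card_le_htd l g herase
    rwa [Finset.card_erase_of_mem hmC] at this
  -- m is below u in left endpoint
  have hmv : m < v := (hC.1 m hmC).2
  have hlyx : l v ≤ g u := hlyx0
  have hgm : g m < l v := (hiff m v).mp hmv
  have hml : l m ≤ l u := by
    have hmd := (hC.1 m hmC).1
    -- g m < l v ≤ g u, same lengths
    linarith [hmd, hu, hgm, hlyx]
  have h2 := htd_mono l g hiff (d := d) hml
  omega


/-- The set of class-`d` elements at level `m`. -/
noncomputable def lvlSet (d : ℝ) (m : ℕ) : Finset α :=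
  univ.filter (fun z => g z - l z = d ∧ htd l g d z = m)

/-- Max left endpoint on a level. -/
noncomputable def Msup (d : ℝ) (m : ℕ) : ℝ :=
  if h : (lvlSet l g d m).Nonempty then (lvlSet l g d m).sup' h l else 0

lemma mem_lvlSet {d : ℝ} {m : ℕ} {x : α} :
    x ∈ lvlSet l g d m ↔ (g x - l x = d ∧ htd l g d x = m) := by
  simp [lvlSet]

lemma le_Msup {d : ℝ} {x : α} (hx : g x - l x = d) :
    l x ≤ Msup l g d (htd l g d x) := by
  have hmem : x ∈ lvlSet l g d (htd l g d x) := (mem_lvlSet l g).mpr ⟨hx, rfl⟩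
  rw [Msup, dif_pos ⟨x, hmem⟩]
  exact Finset.le_sup' l hmem

lemma Msup_le (hiff : ∀ x y : α, x < y ↔ g x < l y) {d : ℝ} {x : α} (hx : g x - l x = d) :
    Msup l g d (htd l g d x) ≤ g x := by
  have hmem : x ∈ lvlSet l g d (htd l g d x) := (mem_lvlSet l g).mpr ⟨hx, rfl⟩
  rw [Msup, dif_pos ⟨x, hmem⟩]
  apply Finset.sup'_le
  intro z hz
  rw [mem_lvlSet] at hz
  -- same class same level: ¬ (x < z)
  by_contra hcz
  push_neg at hcz
  have hxz : x < z := (hiff x z).mpr hcz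
  have := htd_lt l g (d := d) hx hxz
  omega

/-- For the natural cross-level direction. -/
lemma Msup_lt_g (hlg : ∀ x, l x ≤ g x) (hiff : ∀ x y : α, x < y ↔ g x < l y) {d : ℝ} {u v : α} (hu : g u - l u = d) (hv : g v - l v = d)
    (hlev : htd l g d v = htd l g d u + 1) :
    Msup l g d (htd l g d u) < g v := by
  have humem : u ∈ lvlSet l g d (htd l g d u) := (mem_lvlSet l g).mpr ⟨hu, rfl⟩
  have hne : (lvlSet l g d (htd l g d u)).Nonempty := ⟨u, humem⟩
  rw [Msup, dif_pos hne]
  obtain ⟨z, hz, hzeq⟩ := Finset.exists_mem_eq_sup' hne l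
  rw [hzeq]
  rw [mem_lvlSet] at hz
  by_contra hcon
  push_neg at hcon
  -- l v ≤ g v ≤ l z would give htd v ≤ htd z
  have hlvz : l v ≤ l z := le_trans (hlg v) hcon
  have := htd_mono l g hiff (d := d) hlvz
  omega

/-! ### Lexicographic keys -/

abbrev K : Type := ℝ ×ₗ (ℝ ×ₗ (ℝ ×ₗ ℝ))

def mk4 (a b c e : ℝ) : K := toLex (a, toLex (b, toLex (c, e)))

lemma mk4_lt_mk4 {a b c e a' b' c' e' : ℝ} :
    mk4 a b c e < mk4 a' b' c' e' ↔
      a < a' ∨ (a = a' ∧ (b < b' ∨ (b = b' ∧ (c < c' ∨ (c = c' ∧ e < e'))))) := by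
  simp [mk4, Prod.Lex.lt_iff]

lemma mk4_lt_of_fst {a b c e a' b' c' e' : ℝ} (h : a < a') :
    mk4 a b c e < mk4 a' b' c' e' := mk4_lt_mk4.mpr (Or.inl h)

variable (ι : α → ℕ)

/-- The key function for the extension indexed by class `d` and residue `i`. -/
noncomputable def Phi (d : ℝ) (i : ℕ) (x : α) : K :=
  if g x - l x = d then
    if htd l g d x % 3 = i % 3 then
      mk4 (Msup l g d (htd l g d x)) 0 (-(l x)) (-(ι x : ℝ))
    else if htd l g d x % 3 = (i + 1) % 3 then
      mk4 (g x) 0 (l x) (ι x)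
    else
      mk4 (l x) (-1) (l x) (ι x)
  else mk4 (g x) 0 (l x) (ι x)

lemma phi_repr (hlg : ∀ x, l x ≤ g x) (hiff : ∀ x y : α, x < y ↔ g x < l y)
    (d : ℝ) (i : ℕ) (x : α) :
    ∃ a b c e, Phi l g ι d i x = mk4 a b c e ∧ l x ≤ a ∧ a ≤ g x := by
  unfold Phi
  split_ifs with h1 h2 h3
  · exact ⟨_, _, _, _, rfl, le_Msup l g h1, Msup_le l g hiff h1⟩
  · exact ⟨_, _, _, _, rfl, hlg x, le_rfl⟩
  · exact ⟨_, _, _, _, rfl, le_rfl, hlg x⟩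
  · exact ⟨_, _, _, _, rfl, hlg x, le_rfl⟩

/-- Each `Phi` order extends the partial order strictly. -/
lemma phi_lt_of_lt (hlg : ∀ x, l x ≤ g x) (hiff : ∀ x y : α, x < y ↔ g x < l y)
    {d : ℝ} {i : ℕ} {x y : α} (hxy : x < y) :
    Phi l g ι d i x < Phi l g ι d i y := by
  obtain ⟨a, b, c, e, hx, hxa, hag⟩ := phi_repr l g ι hlg hiff d i x
  obtain ⟨a', b', c', e', hy, hya, hag'⟩ := phi_repr l g ι hlg hiff d i y
  rw [hx, hy]
  apply mk4_lt_of_fst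
  have := (hiff x y).mp hxy
  linarith

lemma phi_e4 (d : ℝ) (i : ℕ) (x : α) :
    (ofLex ((ofLex ((ofLex (Phi l g ι d i x)).2)).2)).2 = -(ι x : ℝ) ∨
    (ofLex ((ofLex ((ofLex (Phi l g ι d i x)).2)).2)).2 = (ι x : ℝ) := by
  unfold Phi
  split_ifs <;> simp [mk4]

lemma phi_injective (hι : Function.Injective ι) (d : ℝ) (i : ℕ) :
    Function.Injective (Phi l g ι d i) := by
  intro x y hxy
  have hx := phi_e4 l g ι d i x
  have hy := phi_e4 l g ι d i y
  rw [hxy] at hx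
  have hmix : ∀ u v : α, -(ι u : ℝ) = (ι v : ℝ) → ι u = ι v := by
    intro u v huv
    have h1 : (0:ℝ) ≤ (ι u : ℝ) := Nat.cast_nonneg _
    have h2 : (0:ℝ) ≤ (ι v : ℝ) := Nat.cast_nonneg _
    have h3 : (ι u : ℝ) = 0 := by linarith
    have h4 : (ι v : ℝ) = 0 := by linarith
    exact_mod_cast h3.trans h4.symm
  rcases hx with hx | hx <;> rcases hy with hy | hy
  · apply hι; have := hx.symm.trans hy; exact_mod_cast neg_inj.mp this
  · apply hι; exact hmix x y (hx.symm.trans hy)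
  · apply hι; exact (hmix y x (hy.symm.trans hx)).symm
  · apply hι; have := hx.symm.trans hy; exact_mod_cast this

/-! ### The linear extensions -/

noncomputable def extRel (d : ℝ) (i : ℕ) : α → α → Prop :=
  fun x y => x = y ∨ Phi l g ι d i x < Phi l g ι d i y

lemma extRel_isLinearOrder (hlg : ∀ x, l x ≤ g x) (hiff : ∀ x y : α, x < y ↔ g x < l y)
    (hι : Function.Injective ι) (d : ℝ) (i : ℕ) :
    IsLinearOrder α (extRel l g ι d i) := by
  haveI : IsRefl α (extRel l g ι d i) := ⟨fun a => Or.inl rfl⟩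
  haveI : IsTrans α (extRel l g ι d i) := by
    constructor
    rintro a b c (rfl | hab) (rfl | hbc)
    · exact Or.inl rfl
    · exact Or.inr hbc
    · exact Or.inr hab
    · exact Or.inr (hab.trans hbc)
  haveI : IsAntisymm α (extRel l g ι d i) := by
    constructor
    rintro a b (rfl | hab) (hba | hba)
    · rfl
    · rfl
    · exact hba.symm
    · exact absurd hba (lt_asymm hab)
  haveI : IsTotal α (extRel l g ι d i) := by
    constructor
    intro a b
    rcases eq_or_ne a b with rfl | hne
    · exact Or.inl (Or.inl rfl)
    · rcases lt_trichotomy (Phi l g ι d i a) (Phi l g ι d i b) with h | h | h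
      · exact Or.inl (Or.inr h)
      · exact absurd (phi_injective l g ι hι d i h) hne
      · exact Or.inr (Or.inr h)
  haveI : IsPreorder α (extRel l g ι d i) := ⟨⟩
  haveI : IsPartialOrder α (extRel l g ι d i) := ⟨⟩
  exact ⟨⟩

lemma extRel_extends (hlg : ∀ x, l x ≤ g x) (hiff : ∀ x y : α, x < y ↔ g x < l y)
    (d : ℝ) (i : ℕ) {x y : α} (hxy : x ≤ y) : extRel l g ι d i x y := by
  rcases eq_or_lt_of_le hxy with rfl | hlt
  · exact Or.inl rfl
  · exact Or.inr (phi_lt_of_lt l g ι hlg hiff hlt)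

lemma not_extRel (d : ℝ) (i : ℕ) {x y : α} (hne : x ≠ y)
    (h : Phi l g ι d i y < Phi l g ι d i x) : ¬ extRel l g ι d i x y := by
  rintro (rfl | h')
  · exact hne rfl
  · exact lt_asymm h h'

/-- Master coverage lemma: for any incomparable pair `x, y` there is a residue `i`
such that the extension for the class of `y` puts `y` strictly below `x`. -/
lemma coverage (hlg : ∀ x, l x ≤ g x) (hiff : ∀ x y : α, x < y ↔ g x < l y)
    (hι : Function.Injective ι) {x y : α} (hne : x ≠ y)
    (hnxy : ¬ x < y) (hnyx : ¬ y < x) :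
    ∃ i : ℕ, Phi l g ι (g y - l y) i y < Phi l g ι (g y - l y) i x := by
  set d : ℝ := g y - l y with hd
  have hyd : g y - l y = d := rfl
  have hlyx : l y ≤ g x := le_of_not_gt (fun hc => hnxy ((hiff x y).mpr hc))
  have hlxy : l x ≤ g y := le_of_not_gt (fun hc => hnyx ((hiff y x).mpr hc))
  by_cases hxd : g x - l x = d
  · -- same class
    have h1 := htd_le_succ l g hlg hiff hxd hyd hnxy
    have h2 := htd_le_succ l g hlg hiff hyd hxd hnyx
    clear hnxy hnyx
    set m := htd l g d x with hm
    set n := htd l g d y with hn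
    rcases Nat.lt_trichotomy n m with hc | hc | hc
    · -- y one level below x : natural drop, x upper; i := n % 3, y is s0, x is s1
      have hmn : m = n + 1 := by omega
      refine ⟨n % 3, ?_⟩
      have hyphi : Phi l g ι d (n % 3) y = mk4 (Msup l g d n) 0 (-(l y)) (-(ι y : ℝ)) := by
        unfold Phi
        rw [if_pos hyd, ← hn, if_pos (by omega)]
      have hxphi : Phi l g ι d (n % 3) x = mk4 (g x) 0 (l x) (ι x) := by
        unfold Phi
        rw [if_pos hxd, ← hm]
        rw [if_neg (by omega), if_pos (by omega)]
      rw [hyphi, hxphi]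
      apply mk4_lt_of_fst
      exact Msup_lt_g l g hlg hiff hyd hxd (by omega)
    · -- same level : slides
      have hkey : (l x < l y ∨ (l x = l y ∧ ι x < ι y)) ∨
                  (l y < l x ∨ (l y = l x ∧ ι y < ι x)) := by
        rcases lt_trichotomy (l x) (l y) with h | h | h
        · exact Or.inl (Or.inl h)
        · rcases Nat.lt_trichotomy (ι x) (ι y) with h' | h' | h'
          · exact Or.inl (Or.inr ⟨h, h'⟩)
          · exact absurd (hι h') hne
          · exact Or.inr (Or.inr ⟨h.symm, h'⟩)
        · exact Or.inr (Or.inl h)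
      rcases hkey with hk | hk
      · -- key x < key y : use s0 (anti-slide), i := n % 3
        refine ⟨n % 3, ?_⟩
        have hyphi : Phi l g ι d (n % 3) y = mk4 (Msup l g d n) 0 (-(l y)) (-(ι y : ℝ)) := by
          unfold Phi
          rw [if_pos hyd, ← hn, if_pos (by omega)]
        have hxphi : Phi l g ι d (n % 3) x = mk4 (Msup l g d n) 0 (-(l x)) (-(ι x : ℝ)) := by
          unfold Phi
          rw [if_pos hxd, ← hm, hc, if_pos (by omega)]
        rw [hyphi, hxphi]
        rcases hk with h | ⟨h, h'⟩
        · exact mk4_lt_mk4.mpr (Or.inr ⟨rfl, Or.inr ⟨rfl, Or.inl (by linarith)⟩⟩)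
        · refine mk4_lt_mk4.mpr (Or.inr ⟨rfl, Or.inr ⟨rfl, Or.inr ⟨by rw [h], ?_⟩⟩⟩)
          have : (ι x : ℝ) < (ι y : ℝ) := by exact_mod_cast h'
          linarith
      · -- key y < key x : use s2 (natural slide), i := (n+1) % 3
        refine ⟨(n + 1) % 3, ?_⟩
        have hyphi : Phi l g ι d ((n+1) % 3) y = mk4 (l y) (-1) (l y) (ι y : ℝ) := by
          unfold Phi
          rw [if_pos hyd, ← hn]
          rw [if_neg (by omega), if_neg (by omega)]
        have hxphi : Phi l g ι d ((n+1) % 3) x = mk4 (l x) (-1) (l x) (ι x : ℝ) := by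
          unfold Phi
          rw [if_pos hxd, ← hm, hc]
          rw [if_neg (by omega), if_neg (by omega)]
        rw [hyphi, hxphi]
        rcases hk with h | ⟨h, h'⟩
        · exact mk4_lt_of_fst h
        · refine mk4_lt_mk4.mpr (Or.inr ⟨h, Or.inr ⟨rfl, Or.inr ⟨h, ?_⟩⟩⟩)
          exact_mod_cast h'
    · -- y one level above x : anti drop, i := (m+2) % 3, x is s1, y is s2
      have hnm : n = m + 1 := by omega
      refine ⟨(m + 2) % 3, ?_⟩
      have hyphi : Phi l g ι d ((m+2) % 3) y = mk4 (l y) (-1) (l y) (ι y : ℝ) := by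
        unfold Phi
        rw [if_pos hyd, ← hn, hnm]
        rw [if_neg (by omega), if_neg (by omega)]
      have hxphi : Phi l g ι d ((m+2) % 3) x = mk4 (g x) 0 (l x) (ι x : ℝ) := by
        unfold Phi
        rw [if_pos hxd, ← hm]
        rw [if_neg (by omega), if_pos (by omega)]
      rw [hyphi, hxphi]
      rcases lt_or_eq_of_le hlyx with h | h
      · exact mk4_lt_of_fst h
      · exact mk4_lt_mk4.mpr (Or.inr ⟨h, Or.inl (by norm_num)⟩)
  · -- cross class : F, y is s2 in its own class
    set n := htd l g d y with hn
    refine ⟨(n + 1) % 3, ?_⟩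
    have hyphi : Phi l g ι d ((n+1) % 3) y = mk4 (l y) (-1) (l y) (ι y : ℝ) := by
      unfold Phi
      rw [if_pos hyd, ← hn]
      rw [if_neg (by omega), if_neg (by omega)]
    have hxphi : Phi l g ι d ((n+1) % 3) x = mk4 (g x) 0 (l x) (ι x : ℝ) := by
      unfold Phi
      rw [if_neg hxd]
    rw [hyphi, hxphi]
    rcases lt_or_eq_of_le hlyx with h | h
    · exact mk4_lt_of_fst h
    · exact mk4_lt_mk4.mpr (Or.inr ⟨h, Or.inl (by norm_num)⟩)

end Stmt15

theorem stmt15_main {α : Type*} [Fintype α] [PartialOrder α] (r : ℕ)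
    (h : ∃ l g : α → ℝ, (∀ x, l x ≤ g x) ∧ (∀ x y : α, x < y ↔ g x < l y) ∧
      ∃ T : Finset ℝ, T.card ≤ r ∧ ∀ x, g x - l x ∈ T) :
    ∃ L : Fin (3 * r + r.choose 2) → α → α → Prop,
      (∀ i, (IsLinearOrder α (L i) ∧ ∀ x y : α, x ≤ y → L i x y)) ∧
      ∀ x y : α, x ≤ y ↔ ∀ i, L i x y := by
  classical
  obtain ⟨l, g, hlg, hiff, T, hTc, hmemT⟩ := h
  set t := 3 * r + r.choose 2 with ht
  let ι : α → ℕ := fun x => ((Fintype.equivFin α) x : ℕ)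
  have hι : Function.Injective ι := by
    intro a b hab
    exact (Fintype.equivFin α).injective (Fin.val_injective hab)
  let idx : Fin T.card → ℝ := fun k => ((T.equivFin.symm k : {x // x ∈ T}) : ℝ)
  let L : Fin t → α → α → Prop := fun j =>
    if h3 : (j : ℕ) / 3 < T.card then Stmt15.extRel l g ι (idx ⟨(j : ℕ) / 3, h3⟩) ((j : ℕ) % 3)
    else Stmt15.extRel l g ι 0 0
  have hLshape : ∀ j : Fin t, ∃ d i, L j = Stmt15.extRel l g ι d i := by
    intro j
    by_cases h3 : (j : ℕ) / 3 < T.card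
    · exact ⟨_, _, dif_pos h3⟩
    · exact ⟨_, _, dif_neg h3⟩
  refine ⟨L, ?_, ?_⟩
  · intro j
    obtain ⟨d, i, hdi⟩ := hLshape j
    rw [hdi]
    exact ⟨Stmt15.extRel_isLinearOrder l g ι hlg hiff hι d i,
      fun x y hxy => Stmt15.extRel_extends l g ι hlg hiff d i hxy⟩
  · intro x y
    constructor
    · intro hxy j
      obtain ⟨d, i, hdi⟩ := hLshape j
      rw [hdi]
      exact Stmt15.extRel_extends l g ι hlg hiff d i hxy
    · intro hall
      by_contra hnxy
      have hne : x ≠ y := fun he => hnxy (le_of_eq he)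
      have hr1 : 1 ≤ r := by
        have : T.Nonempty := ⟨g x - l x, hmemT x⟩
        have := Finset.card_pos.mpr this
        omega
      have ht3 : 3 ≤ t := by
        have : 3 * 1 ≤ 3 * r := by omega
        omega
      by_cases hyx : y ≤ x
      · -- y < x : any extension refutes L j x y
        have hylt : y < x := lt_of_le_of_ne hyx (fun he => hne he.symm)
        have hj : (⟨0, by omega⟩ : Fin t) ∈ (Set.univ : Set (Fin t)) := trivial
        obtain ⟨d, i, hdi⟩ := hLshape ⟨0, by omega⟩
        have := hall ⟨0, by omega⟩
        rw [hdi] at this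
        exact Stmt15.not_extRel l g ι d i hne
          (Stmt15.phi_lt_of_lt l g ι hlg hiff hylt) this
      · -- incomparable
        have hnxylt : ¬ x < y := fun hc => hnxy (le_of_lt hc)
        have hnyxlt : ¬ y < x := fun hc => hyx (le_of_lt hc)
        obtain ⟨i0, hcov⟩ := Stmt15.coverage l g ι hlg hiff hι hne hnxylt hnyxlt
        -- we may take i0 % 3 in place of i0 ... (Phi only depends on i % 3)
        have hmod : ∀ i : ℕ, Stmt15.Phi l g ι (g y - l y) (i % 3) =
            Stmt15.Phi l g ι (g y - l y) i := by
          intro i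
          funext z
          unfold Stmt15.Phi
          have e1 : i % 3 % 3 = i % 3 := by omega
          rw [e1]
          have e2 : (i % 3 + 1) % 3 = (i + 1) % 3 := by omega
          rw [e2]
        rw [← hmod i0] at hcov
        -- index of the class of y
        have hdT : g y - l y ∈ T := hmemT y
        set k : Fin T.card := T.equivFin ⟨g y - l y, hdT⟩ with hk
        have hkidx : idx k = g y - l y := by
          simp only [idx, hk, Equiv.symm_apply_apply]
        have hjlt : 3 * (k : ℕ) + i0 % 3 < t := by
          have hk3 : (k : ℕ) < T.card := k.isLt
          have h1 : 3 * (k : ℕ) + i0 % 3 < 3 * T.card := by omega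
          have h2 : 3 * T.card ≤ 3 * r := by omega
          omega
        set j : Fin t := ⟨3 * (k : ℕ) + i0 % 3, hjlt⟩ with hjdef
        have hdiv : (j : ℕ) / 3 = (k : ℕ) := by
          simp only [hjdef]
          omega
        have hmd : (j : ℕ) % 3 = i0 % 3 := by
          simp only [hjdef]
          omega
        have h3 : (j : ℕ) / 3 < T.card := by rw [hdiv]; exact k.isLt
        have hLj : L j = Stmt15.extRel l g ι (idx ⟨(j : ℕ) / 3, h3⟩) ((j : ℕ) % 3) :=
          dif_pos h3
        have hfin : (⟨(j : ℕ) / 3, h3⟩ : Fin T.card) = k := Fin.ext hdiv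
        rw [hfin, hkidx, hmd] at hLj
        have := hall j
        rw [hLj] at this
        exact Stmt15.not_extRel l g ι (g y - l y) (i0 % 3) hne hcov this

/-- If a finite interval order has a representation in which the set of interval
lengths has cardinality at most `r`, then its dimension is at most `3r + C(r,2)`. -/
theorem stmt_15 {α : Type*} [Fintype α] [PartialOrder α] (r : ℕ)
    (h : ∃ l g : α → ℝ, (∀ x, l x ≤ g x) ∧ (∀ x y : α, x < y ↔ g x < l y) ∧
      ∃ T : Finset ℝ, T.card ≤ r ∧ ∀ x, g x - l x ∈ T) :
    DimLE α (3 * r + r.choose 2) := by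
  obtain ⟨L, h1, h2⟩ := stmt15_main r h
  exact ⟨L, fun i => ⟨(h1 i).1, (h1 i).2⟩, h2⟩
end

section
/- Let P be a finite interval order with a fixed representation, let Q be the subposet on the unit-length intervals partitioned into antichains A_1,...,A_t by successively removing minimal elements, let p_i be the minimum right endpoint among intervals in A_i, and partition the length-0 intervals into sets D_0,...,D_t according to location relative to the p_i (D_0: c ≤ p_1; D_i: p_i < c ≤ p_{i+1} for 1 ≤ i ≤ t-1; D_t: c > p_t). Then A_{i+2} > D_i for 0 ≤ i ≤ t-2, D_i > A_{i-1} for 2 ≤ i ≤ t, and A_j > A_i whenever j ≥ i+2. -/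
section Layers

variable {α : Type*} [PartialOrder α] {Q : Set α} {n : ℕ} {x : α}

theorem rest_antitone (Q : Set α) : Antitone (rest Q) :=
  antitone_nat_of_succ_le fun _ _ hx => hx.1

theorem rest_subset (n : ℕ) : rest Q n ⊆ Q :=
  rest_antitone Q (Nat.zero_le n)

theorem layer_subset_rest : layer Q n ⊆ rest Q n :=
  fun _ hx => hx.1

theorem mem_layer_iff_minimal : x ∈ layer Q n ↔ Minimal (· ∈ rest Q n) x := by
  rw [minimal_iff_forall_lt]
  exact and_congr_right fun _ => forall_congr' fun y => by tauto

theorem exists_mem_layer_lt_of_mem_rest_succ [WellFoundedLT α] (hx : x ∈ rest Q (n + 1)) :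
    ∃ y ∈ layer Q n, y < x := by
  obtain ⟨-, w, hw, hwx⟩ := hx
  obtain ⟨y, hyw, hy⟩ := exists_minimal_le_of_wellFoundedLT (· ∈ rest Q n) w hw
  exact ⟨y, mem_layer_iff_minimal.2 hy, hyw.trans_lt hwx⟩

end Layers

section IntervalRepresentation

variable {α : Type*} [PartialOrder α] {l g : α → ℝ} {Q : Set α} {n : ℕ} {x y z : α}

theorem left_le_right_of_mem_layer (hrep : ∀ x y : α, x < y ↔ g x < l y)
    (hx : x ∈ layer Q n) (hy : y ∈ rest Q n) : l x ≤ g y :=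
  not_lt.1 fun h => hx.2 y hy ((hrep y x).2 h)

theorem left_lt_left_of_mem_layer_of_mem_rest_succ (hrep : ∀ x y : α, x < y ↔ g x < l y)
    (hx : x ∈ layer Q n) (hz : z ∈ rest Q (n + 1)) : l x < l z := by
  obtain ⟨-, w, hw, hwz⟩ := hz
  exact (left_le_right_of_mem_layer hrep hx hw).trans_lt ((hrep w z).1 hwz)

theorem right_lt_right_of_mem_layer_of_mem_rest_succ (hrep : ∀ x y : α, x < y ↔ g x < l y)
    (hunit : ∀ x ∈ Q, g x = l x + 1) (hx : x ∈ layer Q n) (hz : z ∈ rest Q (n + 1)) :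
    g x < g z := by
  rw [hunit x (rest_subset n (layer_subset_rest hx)), hunit z (rest_subset _ hz)]
  linarith [left_lt_left_of_mem_layer_of_mem_rest_succ hrep hx hz]

theorem lt_of_mem_layer_of_mem_rest_add_two_s17 (hrep : ∀ x y : α, x < y ↔ g x < l y)
    (hunit : ∀ x ∈ Q, g x = l x + 1) (hx : x ∈ layer Q n) (hy : y ∈ rest Q (n + 2)) :
    x < y := by
  obtain ⟨-, z, hz, hzy⟩ := hy
  exact (hrep x y).2 <|
    (right_lt_right_of_mem_layer_of_mem_rest_succ hrep hunit hx hz).trans ((hrep z y).1 hzy)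

theorem lt_left_of_mem_rest_succ [WellFoundedLT α] (hrep : ∀ x y : α, x < y ↔ g x < l y)
    {c : ℝ} (hc : c ∈ lowerBounds (g '' layer Q n)) (hx : x ∈ rest Q (n + 1)) : c < l x := by
  obtain ⟨y, hy, hyx⟩ := exists_mem_layer_lt_of_mem_rest_succ hx
  exact (hc ⟨y, hy, rfl⟩).trans_lt ((hrep y x).1 hyx)

end IntervalRepresentation

theorem stmt_17_general {α : Type*} [Fintype α] [PartialOrder α]
    (l g : α → ℝ)
    (hrep : ∀ x y : α, x < y ↔ g x < l y)
    (Q : Set α) (hQ : Q = {x | g x - l x = 1})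
    (t : ℕ) (ht : ∀ i, (layer Q i).Nonempty ↔ i < t)
    (p : ℕ → ℝ) (hp : ∀ i < t, IsLeast (g '' layer Q i) (p i))
    (D : ℕ → Set α)
    (hD0 : D 0 = {x | g x - l x = 0 ∧ g x ≤ p 0})
    (hDmid : ∀ i, 1 ≤ i → i ≤ t - 1 →
      D i = {x | g x - l x = 0 ∧ p (i - 1) < g x ∧ g x ≤ p i})
    (hDt : D t = {x | g x - l x = 0 ∧ p (t - 1) < g x}) :
    (∀ i ≤ t - 2, ∀ a ∈ layer Q (i + 1), ∀ d ∈ D i, d < a) ∧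
    (∀ i, 2 ≤ i → i ≤ t → ∀ d ∈ D i, ∀ a ∈ layer Q (i - 2), a < d) ∧
    (∀ i j : ℕ, i + 2 ≤ j → j < t → ∀ x ∈ layer Q i, ∀ y ∈ layer Q j, x < y) := by
  have hunit : ∀ x ∈ Q, g x = l x + 1 := fun x hx => by
    rw [hQ] at hx
    linarith [hx.out]
  refine ⟨fun i _ a ha d hd => ?_, fun i h2i hit d hd a ha => ?_,
    fun i j hij _ x hx y hy => ?_⟩
  · have hit : i + 1 < t := (ht (i + 1)).1 ⟨a, ha⟩
    have hdp : g d ≤ p i := by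
      rcases Nat.eq_zero_or_pos i with rfl | hi
      · rw [hD0] at hd; exact hd.2
      · rw [hDmid i hi (by omega)] at hd; exact hd.2.2
    exact (hrep d a).2 <| hdp.trans_lt <|
      lt_left_of_mem_rest_succ hrep (hp i (by omega)).2 (layer_subset_rest ha)
  · have hd' : g d - l d = 0 ∧ p (i - 1) < g d := by
      rcases hit.eq_or_lt with rfl | hit
      · rw [hDt] at hd; exact hd
      · rw [hDmid i (by omega) (by omega)] at hd; exact ⟨hd.1, hd.2.1⟩
    obtain ⟨m, hm, hgm⟩ := (hp (i - 1) (by omega)).1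
    have hm' : m ∈ rest Q (i - 2 + 1) := by
      rw [show i - 2 + 1 = i - 1 by omega]; exact layer_subset_rest hm
    have hgam := right_lt_right_of_mem_layer_of_mem_rest_succ hrep hunit ha hm'
    exact (hrep a d).2 (by linarith [hd'.1, hd'.2, hgam])
  · exact lt_of_mem_layer_of_mem_rest_add_two_s17 hrep hunit hx
      (rest_antitone Q hij (layer_subset_rest hy))

/-- For a finite interval order with a representation by closed intervals of
lengths 0 and 1: with `Q` the unit-interval elements partitioned into antichains
`layer Q 0, …, layer Q (t-1)` (paper's `A₁, …, A_t`), `p i` the least right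
endpoint in `layer Q i`, and the length-0 elements partitioned into
`D 0, …, D t` by position relative to the `p i`, we have: `A_{i+2} > D_i`,
`D_i > A_{i-1}`, and `A_j > A_i` whenever `j ≥ i + 2`. -/
theorem stmt_17 {α : Type*} [Fintype α] [PartialOrder α]
    (l g : α → ℝ) (hlen : ∀ x, g x - l x = 0 ∨ g x - l x = 1)
    (hrep : ∀ x y : α, x < y ↔ g x < l y)
    (Q : Set α) (hQ : Q = {x | g x - l x = 1})
    (t : ℕ) (ht : ∀ i, (layer Q i).Nonempty ↔ i < t)
    (p : ℕ → ℝ) (hp : ∀ i < t, IsLeast (g '' layer Q i) (p i))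
    (D : ℕ → Set α)
    (hD0 : D 0 = {x | g x - l x = 0 ∧ g x ≤ p 0})
    (hDmid : ∀ i, 1 ≤ i → i ≤ t - 1 →
      D i = {x | g x - l x = 0 ∧ p (i - 1) < g x ∧ g x ≤ p i})
    (hDt : D t = {x | g x - l x = 0 ∧ p (t - 1) < g x}) :
    (∀ i ≤ t - 2, ∀ a ∈ layer Q (i + 1), ∀ d ∈ D i, d < a) ∧
    (∀ i, 2 ≤ i → i ≤ t → ∀ d ∈ D i, ∀ a ∈ layer Q (i - 2), a < d) ∧
    (∀ i j : ℕ, i + 2 ≤ j → j < t → ∀ x ∈ layer Q i, ∀ y ∈ layer Q j, x < y) :=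
  stmt_17_general l g hrep Q hQ t ht p hp D hD0 hDmid hDt
end

section
/- For every n ≥ 1, the dimension of the canonical interval order I_n (the interval order whose elements are all closed intervals [i,j] with 1 ≤ i ≤ j ≤ n, ordered by [i,j] < [k,l] iff j < k) tends to infinity as n tends to infinity; in particular, interval orders have unbounded dimension. -/
/-- The order dimension of a poset. -/
noncomputable def orderDim (α : Type*) [PartialOrder α] : ℕ := sInf {t | DimLE α t}

/-- The ground set of the canonical interval order on `n` endpoints: all intervals
`[i, j]` with `1 ≤ i ≤ j ≤ n`. -/
def CanonIntOrd (n : ℕ) : Type := {p : Fin n × Fin n // p.1 ≤ p.2}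

/-- `[i,j] ≤ [k,l]` iff they are equal or `j < k`. -/
instance (n : ℕ) : PartialOrder (CanonIntOrd n) where
  le a b := a = b ∨ a.val.2 < b.val.1
  le_refl a := Or.inl rfl
  le_trans a b c hab hbc := by
    rcases hab with rfl | h
    · exact hbc
    · rcases hbc with rfl | h'
      · exact Or.inr h
      · exact Or.inr (h.trans_le (b.2.trans h'.le))
  le_antisymm a b hab hba := by
    rcases hab with rfl | h
    · rfl
    · rcases hba with rfl | h'
      · rfl
      · exact absurd ((h.trans_le b.2).trans (h'.trans_le a.2)) (lt_irrefl _)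


/-
Every finite poset has finite dimension, so the infimum defining `orderDim` is attained
(Szpilrajn: each non-relation `x ≰ y` is witnessed by a linear extension putting `y` below `x`).
Conversely, a realizer `L₁, …, L_t` of the canonical interval order colours each interval
`[i, j]`, `i < j`, by the pair of sets `{α | [i, j] <_α [j, j]}` and `{α | [i, i] <_α [i, j]}`.
Some `L_α` puts `[j, k]` below `[i, j]`, and this forces the colours of `[i, j]` and `[j, k]`
apart, so the colouring is proper on the shift graph. A proper colouring of the shift graph on
`n` vertices needs `log₂ n` colours, whence `n ≤ 2 ^ 4 ^ t`.
-/

section FiniteDimension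

variable {α : Type*} [PartialOrder α]

theorem exists_isLinearExtension_imp_le (x y : α) :
    ∃ L : α → α → Prop, IsLinearExtension L ∧ (L x y → x ≤ y) := by
  by_cases hxy : x ≤ y
  · obtain ⟨L, hL, hle⟩ := extend_partialOrder ((· ≤ ·) : α → α → Prop)
    exact ⟨L, ⟨hL, hle⟩, fun _ ↦ hxy⟩
  -- put `y` below `x` and close under transitivity
  let r : α → α → Prop := fun u v ↦ u ≤ v ∨ (u ≤ y ∧ x ≤ v)
  have : IsPartialOrder α r :=
    { refl := fun u ↦ Or.inl le_rfl
      trans := by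
        rintro u v w (huv | ⟨huy, hxv⟩) (hvw | ⟨hvy, hxw⟩)
        · exact Or.inl (huv.trans hvw)
        · exact Or.inr ⟨huv.trans hvy, hxw⟩
        · exact Or.inr ⟨huy, hxv.trans hvw⟩
        · exact absurd (hxv.trans hvy) hxy
      antisymm := by
        rintro u v (huv | ⟨huy, hxv⟩) (hvu | ⟨hvy, hxu⟩)
        · exact huv.antisymm hvu
        · exact absurd (hxu.trans (huv.trans hvy)) hxy
        · exact absurd (hxv.trans (hvu.trans huy)) hxy
        · exact absurd (hxv.trans hvy) hxy }
  obtain ⟨L, hL, hrL⟩ := extend_partialOrder r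
  refine ⟨L, ⟨hL, fun u v huv ↦ hrL u v (Or.inl huv)⟩, fun hLxy ↦ ?_⟩
  have hLyx : L y x := hrL y x (Or.inr ⟨le_rfl, le_rfl⟩)
  exact (antisymm hLxy hLyx).le

theorem exists_dimLE_of_finite [Finite α] : ∃ t, DimLE α t := by
  choose L hL hLle using fun p : α × α ↦ exists_isLinearExtension_imp_le p.1 p.2
  let e := Finite.equivFin (α × α)
  refine ⟨Nat.card (α × α), fun i ↦ L (e.symm i), fun i ↦ hL _, fun x y ↦ ⟨?_, ?_⟩⟩
  · exact fun hxy i ↦ (hL _).2 x y hxy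
  · intro h
    simpa using hLle (x, y) (by simpa using h (e (x, y)))

theorem dimLE_orderDim [Finite α] : DimLE α (orderDim α) :=
  Nat.sInf_mem exists_dimLE_of_finite

end FiniteDimension

theorem Fintype.card_le_two_pow_of_shift_coloring {β C : Type*} [LinearOrder β] [Fintype β]
    [Fintype C] (c : ∀ i j : β, i < j → C)
    (hc : ∀ i j k (hij : i < j) (hjk : j < k), c i j hij ≠ c j k hjk) :
    Fintype.card β ≤ 2 ^ Fintype.card C := by
  classical
  let out : β → Set C := fun i ↦ {x | ∃ j h, c i j h = x}
  have hout : Function.Injective out := by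
    refine Function.Injective.of_lt_imp_ne fun i j hij heq ↦ ?_
    obtain ⟨k, hjk, hk⟩ : c i j hij ∈ out j := heq ▸ ⟨j, hij, rfl⟩
    exact hc i j k hij hjk hk.symm
  simpa [Fintype.card_set] using Fintype.card_le_of_injective out hout

namespace CanonIntOrd

variable {n : ℕ}

instance : Finite (CanonIntOrd n) := inferInstanceAs (Finite {p : Fin n × Fin n // p.1 ≤ p.2})

def interval (i j : Fin n) (h : i ≤ j) : CanonIntOrd n := ⟨(i, j), h⟩

def point (i : Fin n) : CanonIntOrd n := interval i i le_rfl

theorem interval_le_interval {i j k l : Fin n} (hij : i ≤ j) (hkl : k ≤ l) (hjk : j < k) :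
    interval i j hij ≤ interval k l hkl :=
  Or.inr hjk

theorem interval_ne_interval {i j k l : Fin n} (hij : i ≤ j) (hkl : k ≤ l)
    (h : i ≠ k ∨ j ≠ l) : interval i j hij ≠ interval k l hkl := by
  intro heq
  have := congrArg Subtype.val heq
  simp only [interval, Prod.mk.injEq] at this
  tauto

theorem not_interval_le_interval {i j k : Fin n} (hij : i < j) (hjk : j ≤ k) :
    ¬ interval i j hij.le ≤ interval j k hjk := by
  rintro (heq | hlt)
  · exact interval_ne_interval _ _ (Or.inl hij.ne) heq
  · exact lt_irrefl _ hlt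

theorem rel_of_rel_interval_interval {L : CanonIntOrd n → CanonIntOrd n → Prop}
    (hL : IsLinearExtension L) {i j k : Fin n} (hij : i < j) (hjk : j < k)
    (hrev : L (interval j k hjk.le) (interval i j hij.le)) :
    L (interval j k hjk.le) (point k) ∧ L (point i) (interval i j hij.le) ∧
      (L (interval i j hij.le) (point j) → ¬ L (point j) (interval j k hjk.le)) := by
  have := hL.1
  refine ⟨?_, ?_, fun hA hB ↦ ?_⟩
  · refine (total_of L _ _).resolve_right fun hkB ↦ ?_
    have hAk := hL.2 _ _ (interval_le_interval hij.le le_rfl hjk)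
    exact interval_ne_interval _ _ (Or.inl (hij.trans hjk).ne)
      (antisymm hAk (_root_.trans hkB hrev))
  · exact _root_.trans (hL.2 _ _ (interval_le_interval le_rfl hjk.le hij)) hrev
  · exact interval_ne_interval _ _ (Or.inr hjk.ne)
      (antisymm hB (_root_.trans hrev hA))

variable {t : ℕ}

def endpointColoring (L : Fin t → CanonIntOrd n → CanonIntOrd n → Prop) (i j : Fin n)
    (hij : i < j) : Set (Fin t) × Set (Fin t) :=
  ({α | L α (interval i j hij.le) (point j)}, {α | L α (point i) (interval i j hij.le)})

theorem endpointColoring_ne {L : Fin t → CanonIntOrd n → CanonIntOrd n → Prop}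
    (hL : ∀ α, IsLinearExtension (L α)) (hreal : ∀ x y, x ≤ y ↔ ∀ α, L α x y)
    {i j k : Fin n} (hij : i < j) (hjk : j < k) :
    endpointColoring L i j hij ≠ endpointColoring L j k hjk := by
  intro heq
  simp only [endpointColoring, Prod.mk.injEq, Set.ext_iff, Set.mem_ofPred_eq] at heq
  obtain ⟨α, hα⟩ : ∃ α, ¬ L α (interval i j hij.le) (interval j k hjk.le) := by
    by_contra! hle
    exact not_interval_le_interval hij hjk.le ((hreal _ _).2 hle)
  have := (hL α).1
  obtain ⟨hBk, hiA, hAB⟩ :=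
    rel_of_rel_interval_interval (hL α) hij hjk ((total_of _ _ _).resolve_left hα)
  exact hAB ((heq.1 α).2 hBk) ((heq.2 α).1 hiA)

theorem le_two_pow_four_pow_of_dimLE (h : DimLE (CanonIntOrd n) t) : n ≤ 2 ^ 4 ^ t := by
  obtain ⟨L, hL, hreal⟩ := h
  have := Fintype.card_le_two_pow_of_shift_coloring (endpointColoring L)
    fun _ _ _ ↦ endpointColoring_ne hL hreal
  simpa [Fintype.card_set, ← mul_pow] using this

end CanonIntOrd

/-- The dimension of the canonical interval order tends to infinity:
interval orders have unbounded dimension. -/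
theorem stmt_18 :
    Filter.Tendsto (fun n => orderDim (CanonIntOrd n)) Filter.atTop Filter.atTop := by
  refine Filter.tendsto_atTop_atTop.2 fun b ↦ ⟨2 ^ 4 ^ b, fun n hn ↦ ?_⟩
  by_contra! hlt
  have hn' := CanonIntOrd.le_two_pow_four_pow_of_dimLE (dimLE_orderDim (α := CanonIntOrd n))
  have : 2 ^ 4 ^ orderDim (CanonIntOrd n) < 2 ^ 4 ^ b :=
    Nat.pow_lt_pow_right (by norm_num) (Nat.pow_lt_pow_right (by norm_num) hlt)
  omega
end
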